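/- arXiv:1306.3965 — 12 statements merged into one kernel-verified Lean document; each statement's English description precedes it below -/
import Mathlib

section
/- Let K/F be an algebraic field extension and let x, y ∈ K have degrees m and n over F, respectively. Assume that (C1) F[x]/F and F[y]/F are Galois extensions, (C2) F[x] ∩ F[y] = F, and (C3) if F has prime characteristic p then p does not divide gcd(m, n). Then F[x, y] = F[αx + βy] for all nonzero α, β ∈ F. -/
/-!
If `σ ∈ Gal(F[x,y]/F)` fixes `z = αx + βy`, then `α(σx - x) = β(y - σy)` lies in
`F[x] ∩ F[y] = F`, so `σ` translates `αx` by some `c ∈ F` and `βy` by `-c`. Since `F[x]/F` is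
Galois of degree `m`, `σᵐ` is the identity on `F[x]`, whence `m c = 0`; likewise `n c = 0`, and
(C3) forces `c = 0`. Thus every automorphism fixing `z` fixes `x` and `y`, and the Galois
correspondence for the finite Galois extension `F[x,y]/F` gives `F[x,y] = F[z]`.
-/

open IntermediateField Module
open scoped IntermediateField

theorem natCast_ne_zero_or_natCast_ne_zero_of_not_dvd_gcd {R : Type*} [Ring R] [NoZeroDivisors R]
    [Nontrivial R] {m n : ℕ} (hm : m ≠ 0)
    (hchar : ∀ p : ℕ, p.Prime → CharP R p → ¬ p ∣ Nat.gcd m n) :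
    (m : R) ≠ 0 ∨ (n : R) ≠ 0 := by
  by_contra! h
  simp only [CharP.cast_eq_zero_iff R (ringChar R)] at h
  rcases CharP.char_is_prime_or_zero R (ringChar R) with hp | hp
  · exact hchar _ hp inferInstance (Nat.dvd_gcd h.1 h.2)
  · exact hm (Nat.eq_zero_of_zero_dvd (hp ▸ h.1))

section

variable {F K : Type*} [Field F] [Field K] [Algebra F K]

theorem AlgEquiv.pow_apply_eq_add_of_apply_eq_add (σ : K ≃ₐ[F] K) {u : K} {c : F}
    (h : σ u = u + algebraMap F K c) (k : ℕ) : (σ ^ k) u = u + algebraMap F K (k * c) := by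
  induction k with
  | zero => simp
  | succ k ih =>
    rw [pow_succ, AlgEquiv.mul_apply, h, map_add, ih, AlgEquiv.commutes]
    push_cast
    ring

theorem AlgEquiv.pow_finrank_apply_eq_self (σ : K ≃ₐ[F] K) (M : IntermediateField F K)
    [FiniteDimensional F M] [IsGalois F M] {u : K} (hu : u ∈ M) :
    (σ ^ finrank F M) u = u := by
  have : AlgEquiv.restrictNormalHom M (σ ^ finrank F M) = 1 := by
    rw [map_pow, ← IsGalois.card_aut_eq_finrank, pow_card_eq_one']
  exact (AlgEquiv.restrictNormal_eq_one_iff M _).mp this u hu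

theorem AlgEquiv.finrank_mul_eq_zero_of_apply_eq_add (σ : K ≃ₐ[F] K) (M : IntermediateField F K)
    [FiniteDimensional F M] [IsGalois F M] {u : K} (hu : u ∈ M) {c : F}
    (h : σ u = u + algebraMap F K c) : (finrank F M : F) * c = 0 := by
  have := σ.pow_apply_eq_add_of_apply_eq_add h (finrank F M)
  rwa [σ.pow_finrank_apply_eq_self M hu, left_eq_add,
    map_eq_zero_iff _ (algebraMap F K).injective] at this

theorem AlgEquiv.exists_apply_eq_add_of_apply_add_eq (σ : K ≃ₐ[F] K) {M₁ M₂ : IntermediateField F K}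
    [Normal F M₁] [Normal F M₂] (hM : M₁ ⊓ M₂ = ⊥) {u v : K} (hu : u ∈ M₁) (hv : v ∈ M₂)
    (h : σ (u + v) = u + v) :
    ∃ c : F, σ u = u + algebraMap F K c ∧ σ v = v - algebraMap F K c := by
  have hσu : σ u ∈ M₁ := σ.restrictNormal_apply M₁ ⟨u, hu⟩ ▸ (σ.restrictNormal M₁ ⟨u, hu⟩).2
  have hσv : σ v ∈ M₂ := σ.restrictNormal_apply M₂ ⟨v, hv⟩ ▸ (σ.restrictNormal M₂ ⟨v, hv⟩).2
  have hshift : σ u - u = v - σ v := by rw [map_add] at h; linear_combination h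
  have hmem : σ u - u ∈ M₁ ⊓ M₂ := ⟨sub_mem hσu hu, hshift ▸ sub_mem hv hσv⟩
  rw [hM] at hmem
  obtain ⟨c, hc⟩ := mem_bot.mp hmem
  exact ⟨c, by rw [hc]; ring, by rw [hc, hshift]; ring⟩

theorem AlgEquiv.apply_eq_self_of_apply_smul_add_smul_eq_self (σ : K ≃ₐ[F] K) {x y : K}
    [FiniteDimensional F F⟮x⟯] [IsGalois F F⟮x⟯] [FiniteDimensional F F⟮y⟯] [IsGalois F F⟮y⟯]
    (hxy : F⟮x⟯ ⊓ F⟮y⟯ = ⊥) (hdeg : (finrank F F⟮x⟯ : F) ≠ 0 ∨ (finrank F F⟮y⟯ : F) ≠ 0)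
    {α β : F} (hα : α ≠ 0) (hβ : β ≠ 0) (hσ : σ (α • x + β • y) = α • x + β • y) :
    σ x = x ∧ σ y = y := by
  obtain ⟨c, hcx, hcy⟩ := σ.exists_apply_eq_add_of_apply_add_eq hxy
    (smul_mem _ (mem_adjoin_simple_self F x)) (smul_mem _ (mem_adjoin_simple_self F y)) hσ
  have hc : c = 0 := by
    have hx := σ.finrank_mul_eq_zero_of_apply_eq_add F⟮x⟯
      (smul_mem _ (mem_adjoin_simple_self F x)) hcx
    have hy := σ.finrank_mul_eq_zero_of_apply_eq_add F⟮y⟯ (c := -c)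
      (smul_mem _ (mem_adjoin_simple_self F y)) (by rw [hcy, map_neg, sub_eq_add_neg])
    rcases hdeg with h | h
    · exact (mul_eq_zero.mp hx).resolve_left h
    · exact neg_eq_zero.mp ((mul_eq_zero.mp hy).resolve_left h)
  subst hc
  simp only [map_zero, add_zero, sub_zero, map_smul, smul_right_inj hα, smul_right_inj hβ]
    at hcx hcy
  exact ⟨hcx, hcy⟩

theorem mem_adjoin_simple_of_forall_apply_eq_self [FiniteDimensional F K] [IsGalois F K]
    {z u : K} (h : ∀ σ : K ≃ₐ[F] K, σ z = z → σ u = u) : u ∈ F⟮z⟯ := by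
  rw [← IsGalois.fixedField_fixingSubgroup F⟮z⟯, mem_fixedField_iff]
  exact fun σ hσ ↦ h σ ((mem_fixingSubgroup_iff _ _).mp hσ z (mem_adjoin_simple_self F z))

theorem adjoin_pair_eq_adjoin_smul_add_smul [FiniteDimensional F K] [IsGalois F K] {x y : K}
    [IsGalois F F⟮x⟯] [IsGalois F F⟮y⟯]
    (hxy : F⟮x⟯ ⊓ F⟮y⟯ = ⊥) (hdeg : (finrank F F⟮x⟯ : F) ≠ 0 ∨ (finrank F F⟮y⟯ : F) ≠ 0)
    {α β : F} (hα : α ≠ 0) (hβ : β ≠ 0) : F⟮x, y⟯ = F⟮α • x + β • y⟯ := by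
  have hfix (σ : K ≃ₐ[F] K) (hσ : σ (α • x + β • y) = α • x + β • y) :=
    σ.apply_eq_self_of_apply_smul_add_smul_eq_self hxy hdeg hα hβ hσ
  apply le_antisymm
  · rw [adjoin_le_iff, Set.insert_subset_iff, Set.singleton_subset_iff]
    exact ⟨mem_adjoin_simple_of_forall_apply_eq_self fun σ hσ ↦ (hfix σ hσ).1,
      mem_adjoin_simple_of_forall_apply_eq_self fun σ hσ ↦ (hfix σ hσ).2⟩
  · rw [adjoin_simple_le_iff]
    exact add_mem (smul_mem _ (subset_adjoin F _ (by simp)))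
      (smul_mem _ (subset_adjoin F _ (by simp)))

theorem finrank_adjoin_simple_coe (E : IntermediateField F K) (u : E) :
    finrank F F⟮u⟯ = finrank F F⟮(u : K)⟯ := by
  rw [(liftAlgEquiv F⟮u⟯).toLinearEquiv.finrank_eq, lift_adjoin_simple]

theorem isGalois_adjoin_simple_of_coe {E : IntermediateField F K} {u : E}
    (h : IsGalois F F⟮(u : K)⟯) : IsGalois F F⟮u⟯ :=
  .of_algEquiv ((liftAlgEquiv F⟮u⟯).trans (equivOfEq (lift_adjoin_simple _ _ u))).symm

theorem adjoin_simple_inf_eq_bot_of_coe {E : IntermediateField F K} {u v : E}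
    (h : F⟮(u : K)⟯ ⊓ F⟮(v : K)⟯ = ⊥) : F⟮u⟯ ⊓ F⟮v⟯ = ⊥ :=
  lift_injective _ (by rw [lift_inf, lift_adjoin_simple, lift_adjoin_simple, h, lift_bot])

end

/-- **Theorem (gen).** Let `K/F` be an algebraic field extension and let `x, y ∈ K` have
degrees `m` and `n` over `F`.  Assume (C1) `F[x]/F` and `F[y]/F` are Galois extensions,
(C2) `F[x] ∩ F[y] = F`, and (C3) if `F` has prime characteristic `p` then `p ∤ gcd(m, n)`.
Then `F[x, y] = F[αx + βy]` for all nonzero `α, β ∈ F`. -/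
theorem stmt0 (F K : Type*) [Field F] [Field K] [Algebra F K] [Algebra.IsAlgebraic F K]
    (x y : K) (m n : ℕ)
    (hm : Module.finrank F (IntermediateField.adjoin F {x}) = m)
    (hn : Module.finrank F (IntermediateField.adjoin F {y}) = n)
    (hGx : IsGalois F (IntermediateField.adjoin F {x}))
    (hGy : IsGalois F (IntermediateField.adjoin F {y}))
    (hInt : IntermediateField.adjoin F {x} ⊓ IntermediateField.adjoin F {y} = ⊥)
    (hchar : ∀ p : ℕ, p.Prime → CharP F p → ¬ p ∣ Nat.gcd m n) :
    ∀ α β : F, α ≠ 0 → β ≠ 0 →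
      IntermediateField.adjoin F {x, y} =
        IntermediateField.adjoin F {α • x + β • y} := by
  intro α β hα hβ
  have : FiniteDimensional F F⟮x⟯ := adjoin.finiteDimensional (Algebra.IsIntegral.isIntegral x)
  have : FiniteDimensional F F⟮y⟯ := adjoin.finiteDimensional (Algebra.IsIntegral.isIntegral y)
  have hxy : F⟮x, y⟯ = F⟮x⟯ ⊔ F⟮y⟯ := by rw [Set.insert_eq, adjoin_union]
  have : FiniteDimensional F F⟮x, y⟯ := hxy ▸ inferInstance
  have : IsGalois F F⟮x, y⟯ := hxy ▸ inferInstance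
  let x' : F⟮x, y⟯ := ⟨x, subset_adjoin F _ (by simp)⟩
  let y' : F⟮x, y⟯ := ⟨y, subset_adjoin F _ (by simp)⟩
  have := isGalois_adjoin_simple_of_coe (u := x') hGx
  have := isGalois_adjoin_simple_of_coe (u := y') hGy
  have hdeg : (finrank F F⟮x'⟯ : F) ≠ 0 ∨ (finrank F F⟮y'⟯ : F) ≠ 0 := by
    rw [finrank_adjoin_simple_coe, finrank_adjoin_simple_coe, hm, hn]
    exact natCast_ne_zero_or_natCast_ne_zero_of_not_dvd_gcd (hm ▸ finrank_pos.ne') hchar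
  have hInt' := adjoin_simple_inf_eq_bot_of_coe (u := x') (v := y') hInt
  have := congrArg lift <| adjoin_pair_eq_adjoin_smul_add_smul hInt' hdeg hα hβ
  simpa [lift_adjoin, Set.image_pair] using this
end

section
/- Let K/F be a finite Galois extension whose Galois group is abelian. If x, y ∈ K have degrees m and n over F with gcd(m, n) = 1, then F[x, y] = F[αx + βy] for all nonzero α, β ∈ F. -/
/-!
If `σ` fixes `z = α x + β y`, then `α (σ x - x) = β (y - σ y)`. In an abelian extension every
subextension is Galois, so the left side lies in `F[x]` and the right side in `F[y]`; their
intersection has degree dividing `gcd(m, n) = 1`, so it is `F`. Thus `σ` translates `x` by a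
scalar `u`, and `σ^k x = x + k u`. Taking for `k` the order of `σ` on `F[x]`, which divides `m`,
shows that `u ≠ 0` forces `m = 0` in `F`; likewise `n = 0`, impossible for coprime `m, n`.
Hence `σ` fixes `x` and `y`, and the Galois correspondence gives `F[x, y] ≤ F[z]`.
-/

open IntermediateField Module

section

variable {F K : Type*} [Field F] [Field K] [Algebra F K]

theorem IsAbelianGalois.of_comm [IsGalois F K] (h : ∀ σ τ : K ≃ₐ[F] K, σ * τ = τ * σ) :
    IsAbelianGalois F K where
  is_comm := ⟨h⟩

theorem Nat.Coprime.natCast_ne_zero_of_eq_zero {R : Type*} [CommRing R] [Nontrivial R]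
    {m n : ℕ} (h : m.Coprime n) (hm : (m : R) = 0) : (n : R) ≠ 0 := by
  intro hn
  have := (Nat.isCoprime_iff_coprime.2 h).map (Int.castRingHom R)
  simp only [eq_intCast, Int.cast_natCast, hm, hn, isCoprime_zero_left] at this
  exact not_isUnit_zero this

namespace IntermediateField

theorem inf_eq_bot_of_coprime_finrank {E₁ E₂ : IntermediateField F K}
    (h : (finrank F E₁).Coprime (finrank F E₂)) : E₁ ⊓ E₂ = ⊥ :=
  finrank_eq_one_iff.1 <| Nat.eq_one_of_dvd_coprimes h
    (Dvd.intro _ (finrank_bot_mul_relfinrank inf_le_left))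
    (Dvd.intro _ (finrank_bot_mul_relfinrank inf_le_right))

end IntermediateField

namespace AlgEquiv

theorem apply_mem_of_normal (σ : K ≃ₐ[F] K) (E : IntermediateField F K) [Normal F E] {x : K}
    (hx : x ∈ E) : σ x ∈ E :=
  restrictNormal_apply E σ ⟨x, hx⟩ ▸ (σ.restrictNormal E ⟨x, hx⟩).2

theorem pow_apply_eq_add_of_apply_eq_add_s1 (σ : K ≃ₐ[F] K) {x u : K} (hu : σ u = u)
    (h : σ x = x + u) (k : ℕ) : (σ ^ k) x = x + k * u := by
  induction k with
  | zero => simp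
  | succ k ih =>
    rw [pow_succ', mul_apply, ih, map_add, map_mul, map_natCast, hu, h]
    push_cast
    ring

theorem natCast_finrank_eq_zero_of_apply_eq_add (σ : K ≃ₐ[F] K) (E : IntermediateField F K)
    [IsGalois F E] [FiniteDimensional F E] {x : K} (hx : x ∈ E) {u : F} (hu : u ≠ 0)
    (h : σ x = x + algebraMap F K u) : (finrank F E : F) = 0 := by
  set q := orderOf (restrictNormalHom E σ)
  have hq : q ∣ finrank F E := IsGalois.card_aut_eq_finrank F E ▸ orderOf_dvd_natCard _
  have hfix : (σ ^ q) x = x := by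
    refine (restrictNormal_eq_one_iff E (σ ^ q)).1 ?_ x hx
    show restrictNormalHom E (σ ^ q) = 1
    rw [map_pow, pow_orderOf_eq_one]
  have hqu : (q : K) * algebraMap F K u = 0 := by
    have := pow_apply_eq_add_of_apply_eq_add_s1 σ (σ.commutes u) h q
    rw [hfix] at this
    linear_combination -this
  obtain ⟨c, hc⟩ := hq
  rw [← map_natCast (algebraMap F K), ← map_mul, map_eq_zero] at hqu
  have hq0 : (q : F) = 0 := (mul_eq_zero.1 hqu).resolve_right hu
  rw [hc, Nat.cast_mul, hq0, zero_mul]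

end AlgEquiv

theorem IsGalois.mem_adjoin_simple_of_forall_apply_eq [FiniteDimensional F K] [IsGalois F K]
    {z w : K} (h : ∀ σ : K ≃ₐ[F] K, σ z = z → σ w = w) : w ∈ F⟮z⟯ := by
  rw [← IsGalois.fixedField_fixingSubgroup F⟮z⟯]
  rintro ⟨σ, hσ⟩
  exact h σ ((mem_fixingSubgroup_iff _ σ).1 hσ z (mem_adjoin_simple_self F z))

theorem IsAbelianGalois.apply_eq_self_of_apply_smul_add_smul_eq [IsAbelianGalois F K]
    [FiniteDimensional F K] {x y : K} (hxy : (finrank F F⟮x⟯).Coprime (finrank F F⟮y⟯))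
    {α β : F} (hα : α ≠ 0) (hβ : β ≠ 0) {σ : K ≃ₐ[F] K}
    (hσ : σ (α • x + β • y) = α • x + β • y) : σ x = x := by
  have hd : α • (σ x - x) = β • (y - σ y) := by
    rw [map_add, map_smul, map_smul] at hσ
    rw [smul_sub, smul_sub]
    linear_combination hσ
  have hx_mem := mem_adjoin_simple_self F x
  have hy_mem := mem_adjoin_simple_self F y
  have hmem : α • (σ x - x) ∈ F⟮x⟯ ⊓ F⟮y⟯ :=
    ⟨smul_mem _ (sub_mem (σ.apply_mem_of_normal _ hx_mem) hx_mem),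
      hd ▸ smul_mem _ (sub_mem hy_mem (σ.apply_mem_of_normal _ hy_mem))⟩
  rw [inf_eq_bot_of_coprime_finrank hxy, mem_bot] at hmem
  obtain ⟨c, hc⟩ := hmem
  by_contra hne
  have hc0 : c ≠ 0 := by
    rintro rfl
    rw [map_zero, eq_comm, smul_eq_zero, sub_eq_zero] at hc
    exact hne (hc.resolve_left hα)
  have hx : σ x = x + algebraMap F K (α⁻¹ * c) := by
    rw [map_mul, hc, Algebra.smul_def, ← mul_assoc, ← map_mul, inv_mul_cancel₀ hα, map_one]
    ring
  have hy : σ y = y + algebraMap F K (-(β⁻¹ * c)) := by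
    rw [map_neg, map_mul, hc, hd, Algebra.smul_def, ← mul_assoc, ← map_mul,
      inv_mul_cancel₀ hβ, map_one]
    ring
  exact hxy.natCast_ne_zero_of_eq_zero
    (σ.natCast_finrank_eq_zero_of_apply_eq_add _ hx_mem (by simp [hα, hc0]) hx)
    (σ.natCast_finrank_eq_zero_of_apply_eq_add _ hy_mem (by simp [hβ, hc0]) hy)

end

/-- **Corollary (cw).** Let `K/F` be a finite Galois extension whose Galois group is abelian.
If `x, y ∈ K` have degrees `m` and `n` over `F` with `gcd(m, n) = 1`, then
`F[x, y] = F[αx + βy]` for all nonzero `α, β ∈ F`. -/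
theorem stmt1 (F K : Type*) [Field F] [Field K] [Algebra F K]
    [FiniteDimensional F K] [IsGalois F K]
    (habelian : ∀ σ τ : K ≃ₐ[F] K, σ * τ = τ * σ)
    (x y : K) (m n : ℕ)
    (hm : Module.finrank F (IntermediateField.adjoin F {x}) = m)
    (hn : Module.finrank F (IntermediateField.adjoin F {y}) = n)
    (hcop : Nat.gcd m n = 1) :
    ∀ α β : F, α ≠ 0 → β ≠ 0 →
      IntermediateField.adjoin F {x, y} =
        IntermediateField.adjoin F {α • x + β • y} := by
  intro α β hα hβ
  subst hm hn
  have : IsAbelianGalois F K := .of_comm habelian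
  refine le_antisymm ?_ ?_
  · rw [adjoin_le_iff, Set.insert_subset_iff, Set.singleton_subset_iff]
    exact ⟨IsGalois.mem_adjoin_simple_of_forall_apply_eq fun σ hσ ↦
        IsAbelianGalois.apply_eq_self_of_apply_smul_add_smul_eq hcop hα hβ hσ,
      IsGalois.mem_adjoin_simple_of_forall_apply_eq fun σ hσ ↦
        IsAbelianGalois.apply_eq_self_of_apply_smul_add_smul_eq (Nat.Coprime.symm hcop) hβ hα
          (by rwa [add_comm] at hσ)⟩
  · rw [adjoin_simple_le_iff]
    exact add_mem (smul_mem _ (subset_adjoin F _ (Set.mem_insert x {y})))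
      (smul_mem _ (subset_adjoin F _ (Set.mem_insert_of_mem x (Set.mem_singleton y))))
end

section
/- Let p be a prime, let E be the field with p² elements, and let F = E(X) be the field of rational functions in one variable X over E. Then the polynomial Z^{p²} − Z − X is irreducible in F[Z], and if α is a root of it in an algebraic closure of F, then F[α]/F is a Galois extension of degree p² whose Galois group is isomorphic to the additive group of E, i.e., to C_p × C_p. -/
open Polynomial IntermediateField

/-! Over a finite field `E`, `x ↦ x ^ #E` is an `E`-algebra endomorphism of every `E`-algebra, so
the roots of `Z ^ #E - Z - a` are the translates `α + c`, `c ∈ E`, of any one of them `α`. The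
derivative of this polynomial is `-1`, hence `F⟮α⟯` is the splitting field of a separable
polynomial, and `σ ↦ σ α - α` embeds its Galois group into `(E, +)`; when the polynomial is
irreducible both groups have `#E` elements. Irreducibility of `Z ^ #E - Z - X` over `E(X)` comes
from Gauss's lemma: in `E[X][Z]` it is linear in `X`. -/

section

variable {E : Type*} [Field E]

theorem irreducible_map_sub_C_ratFuncX {f : E[X]} (hf : f.Monic) (hdeg : 0 < f.natDegree) :
    Irreducible (f.map (algebraMap E (RatFunc E)) - C RatFunc.X) := by
  have hmonic : (f.map C - C X : E[X][X]).Monic := by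
    refine (hf.map C).sub_of_left (degree_C_le.trans_lt ?_)
    rw [degree_map]
    exact natDegree_pos_iff_degree_pos.mp hdeg
  have hint : Irreducible (f.map C - C X : E[X][X]) := by
    rw [← MulEquiv.irreducible_iff Bivariate.swap.toMulEquiv]
    change Irreducible (Bivariate.swap _)
    rw [map_sub, Bivariate.swap_map_C, Bivariate.swap_X, ← neg_sub]
    exact (prime_X_sub_C f).neg.irreducible
  convert (hmonic.irreducible_iff_irreducible_map_fraction_map (K := RatFunc E)).mp hint using 1
  simp [Polynomial.map_sub, Polynomial.map_map, RatFunc.algebraMap_X]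

end

namespace ArtinSchreier

variable (E : Type*) {F : Type*} [Field E] [Fintype E] [Field F]

theorem add_algebraMap_pow_card {K : Type*} [CommRing K] [Algebra E K] (x : K) (c : E) :
    (x + algebraMap E K c) ^ Fintype.card E = x ^ Fintype.card E + algebraMap E K c := by
  simpa using (FiniteField.frobeniusAlgHom E K).map_add x (algebraMap E K c)

noncomputable def poly (a : F) : F[X] := X ^ Fintype.card E - X - C a

variable {E}

theorem natDegree_poly (a : F) : (poly E a).natDegree = Fintype.card E := by
  rw [poly, natDegree_sub_C, FiniteField.X_pow_card_sub_X_natDegree_eq _ Fintype.one_lt_card]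

theorem monic_poly (a : F) : (poly E a).Monic := by
  rw [poly, sub_sub]
  refine (monic_X_pow _).sub_of_left ?_
  rw [degree_X_add_C, degree_X_pow]
  exact_mod_cast Fintype.one_lt_card

theorem irreducible_poly_X : Irreducible (poly E (RatFunc.X : RatFunc E)) := by
  have hmonic : (X ^ Fintype.card E - X : E[X]).Monic :=
    monic_X_pow_sub (by rw [degree_X]; exact_mod_cast Fintype.one_lt_card)
  have hdeg : 0 < (X ^ Fintype.card E - X : E[X]).natDegree := by
    rw [FiniteField.X_pow_card_sub_X_natDegree_eq E Fintype.one_lt_card]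
    exact Fintype.card_pos
  simpa [poly] using irreducible_map_sub_C_ratFuncX hmonic hdeg

variable {L : Type*} [Field L] [Algebra F L] {a : F} {α : L}

theorem isIntegral_of_aeval_poly_eq_zero (hα : aeval α (poly E a) = 0) : IsIntegral F α :=
  ⟨poly E a, monic_poly a, by rwa [← aeval_def]⟩

theorem finrank_adjoin_simple (hirr : Irreducible (poly E a)) (hα : aeval α (poly E a) = 0) :
    Module.finrank F F⟮α⟯ = Fintype.card E := by
  rw [adjoin.finrank (isIntegral_of_aeval_poly_eq_zero hα),
    ← minpoly.eq_of_irreducible_of_monic hirr hα (monic_poly a), natDegree_poly]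

variable [Algebra E F]

theorem aeval_add_algebraMap_poly {K : Type*} [CommRing K] [Algebra E K] [Algebra F K]
    [IsScalarTower E F K] (a : F) (x : K) (c : E) :
    aeval (x + algebraMap E K c) (poly E a) = aeval x (poly E a) := by
  simp only [poly, map_sub, map_pow, aeval_X, aeval_C, add_algebraMap_pow_card]
  ring

theorem separable_poly (a : F) : (poly E a).Separable := by
  have hcard : (Fintype.card E : F) = 0 := by
    rw [← map_natCast (algebraMap E F), FiniteField.cast_card_eq_zero, map_zero]
  have hder : derivative (poly E a) = -1 := by
    simp [poly, derivative_X_pow, hcard]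
  rw [Polynomial.Separable, hder]
  exact isCoprime_one_right.neg_right

theorem rootSet_poly {K : Type*} [Field K] [Algebra E K] [Algebra F K] [IsScalarTower E F K]
    {a : F} {α : K} (hα : aeval α (poly E a) = 0) :
    (poly E a).rootSet K = Set.range (α + algebraMap E K ·) := by
  have hsub : Set.range (α + algebraMap E K ·) ⊆ (poly E a).rootSet K := by
    rintro _ ⟨c, rfl⟩
    rw [mem_rootSet, aeval_add_algebraMap_poly]
    exact ⟨(monic_poly a).ne_zero, hα⟩
  have hinj : Function.Injective (α + algebraMap E K ·) :=
    (add_right_injective α).comp (algebraMap E K).injective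
  refine (Set.eq_of_subset_of_ncard_le hsub ?_ (rootSet_finite _ K)).symm
  rw [Set.ncard_range_of_injective hinj, Nat.card_eq_fintype_card, ← natDegree_poly a]
  exact ncard_rootSet_le _ _

variable [Algebra E L] [IsScalarTower E F L]

theorem adjoin_rootSet_poly (hα : aeval α (poly E a) = 0) :
    adjoin F ((poly E a).rootSet L) = F⟮α⟯ := by
  rw [rootSet_poly hα]
  apply le_antisymm
  · rw [adjoin_le_iff]
    rintro _ ⟨c, rfl⟩
    change α + algebraMap E L c ∈ F⟮α⟯
    rw [IsScalarTower.algebraMap_apply E F L]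
    exact add_mem (mem_adjoin_simple_self F α) (IntermediateField.algebraMap_mem _ _)
  · rw [adjoin_simple_le_iff]
    exact subset_adjoin _ _ ⟨0, by simp⟩

theorem isGalois_adjoin_simple [IsAlgClosed L] (hα : aeval α (poly E a) = 0) :
    IsGalois F F⟮α⟯ := by
  have := adjoin_rootSet_isSplittingField (IsAlgClosed.splits ((poly E a).map (algebraMap F L)))
  rw [adjoin_rootSet_poly hα] at this
  have := adjoin.finiteDimensional (isIntegral_of_aeval_poly_eq_zero hα)
  exact IsGalois.of_separable_splitting_field (separable_poly (E := E) a)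

theorem exists_algEquiv_gen_eq_add (hα : aeval α (poly E a) = 0) (σ : F⟮α⟯ ≃ₐ[F] F⟮α⟯) :
    ∃ c : E, σ (AdjoinSimple.gen F α) = AdjoinSimple.gen F α + algebraMap E F⟮α⟯ c := by
  have hgen : aeval (AdjoinSimple.gen F α) (poly E a) = 0 := by
    apply (algebraMap F⟮α⟯ L).injective
    rw [← aeval_algebraMap_apply, AdjoinSimple.algebraMap_gen, hα, map_zero]
  have hσ : σ (AdjoinSimple.gen F α) ∈ (poly E a).rootSet F⟮α⟯ := by
    rw [mem_rootSet, aeval_algHom_apply, hgen, map_zero]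
    exact ⟨(monic_poly a).ne_zero, rfl⟩
  rw [rootSet_poly hgen] at hσ
  obtain ⟨c, hc⟩ := hσ
  exact ⟨c, hc.symm⟩

noncomputable def translation (hα : aeval α (poly E a) = 0) (σ : F⟮α⟯ ≃ₐ[F] F⟮α⟯) : E :=
  (exists_algEquiv_gen_eq_add hα σ).choose

theorem algEquiv_gen_eq_add_translation (hα : aeval α (poly E a) = 0) (σ : F⟮α⟯ ≃ₐ[F] F⟮α⟯) :
    σ (AdjoinSimple.gen F α) =
      AdjoinSimple.gen F α + algebraMap E F⟮α⟯ (translation hα σ) :=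
  (exists_algEquiv_gen_eq_add hα σ).choose_spec

theorem translation_mul (hα : aeval α (poly E a) = 0) (σ τ : F⟮α⟯ ≃ₐ[F] F⟮α⟯) :
    translation hα (σ * τ) = translation hα σ + translation hα τ := by
  have hσ : ∀ c : E, σ (algebraMap E F⟮α⟯ c) = algebraMap E F⟮α⟯ c := fun c ↦ by
    rw [IsScalarTower.algebraMap_apply E F F⟮α⟯, σ.commutes]
  apply (algebraMap E F⟮α⟯).injective
  have h := algEquiv_gen_eq_add_translation hα (σ * τ)
  rw [AlgEquiv.mul_apply, algEquiv_gen_eq_add_translation hα τ, map_add,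
    algEquiv_gen_eq_add_translation hα σ, hσ, add_assoc, add_right_inj, ← map_add] at h
  exact h.symm

theorem translation_injective (hα : aeval α (poly E a) = 0) :
    Function.Injective (translation hα) := by
  intro σ τ h
  have hgen : σ (AdjoinSimple.gen F α) = τ (AdjoinSimple.gen F α) := by
    rw [algEquiv_gen_eq_add_translation hα, algEquiv_gen_eq_add_translation hα, h]
  exact AlgEquiv.coe_toAlgHom_injective <| adjoin_algHom_ext F fun x hx ↦ by
    obtain rfl := Set.mem_singleton_iff.mp hx
    exact hgen

noncomputable def autEquivMultiplicative [IsAlgClosed L] (hirr : Irreducible (poly E a))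
    (hα : aeval α (poly E a) = 0) : (F⟮α⟯ ≃ₐ[F] F⟮α⟯) ≃* Multiplicative E :=
  have := isGalois_adjoin_simple hα
  have := adjoin.finiteDimensional (isIntegral_of_aeval_poly_eq_zero hα)
  MulEquiv.ofBijective
    (MonoidHom.mk' (Multiplicative.ofAdd ∘ translation hα) fun σ τ ↦ by
      simp [translation_mul])
    ((Nat.bijective_iff_injective_and_card _).mpr
      ⟨Multiplicative.ofAdd.injective.comp (translation_injective hα), by
        rw [IsGalois.card_aut_eq_finrank, finrank_adjoin_simple hirr hα, Nat.card_eq_fintype_card,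
          Fintype.card_multiplicative]⟩)

end ArtinSchreier

/-- **Example (pedo), setup.** Let `p` be a prime, `E = 𝔽_{p²}`, and `F = E(X)`.
Then `Z^{p²} - Z - X` is irreducible in `F[Z]`, and if `α` is a root of it in an
algebraic closure of `F`, then `F[α]/F` is a Galois extension of degree `p²` whose
Galois group is isomorphic to the additive group of `E`, i.e. to `C_p × C_p`. -/
theorem stmt2 (p : ℕ) [Fact p.Prime]
    (q : Polynomial (RatFunc (GaloisField p 2)))
    (hq : q = Polynomial.X ^ (p ^ 2) - Polynomial.X - Polynomial.C RatFunc.X) :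
    Irreducible q ∧
      ∀ α : AlgebraicClosure (RatFunc (GaloisField p 2)),
        Polynomial.aeval α q = 0 →
          IsGalois (RatFunc (GaloisField p 2))
            (IntermediateField.adjoin (RatFunc (GaloisField p 2)) {α}) ∧
          Module.finrank (RatFunc (GaloisField p 2))
            (IntermediateField.adjoin (RatFunc (GaloisField p 2)) {α}) = p ^ 2 ∧
          Nonempty ((IntermediateField.adjoin (RatFunc (GaloisField p 2)) {α} ≃ₐ[RatFunc (GaloisField p 2)]
              IntermediateField.adjoin (RatFunc (GaloisField p 2)) {α}) ≃*
            Multiplicative (GaloisField p 2)) ∧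
          Nonempty ((IntermediateField.adjoin (RatFunc (GaloisField p 2)) {α} ≃ₐ[RatFunc (GaloisField p 2)]
              IntermediateField.adjoin (RatFunc (GaloisField p 2)) {α}) ≃*
            Multiplicative (ZMod p × ZMod p)) := by
  let : Fintype (GaloisField p 2) := Fintype.ofFinite _
  have hcard : Fintype.card (GaloisField p 2) = p ^ 2 := by
    rw [Fintype.card_eq_nat_card, GaloisField.card p 2 two_ne_zero]
  obtain rfl : q = ArtinSchreier.poly (GaloisField p 2) RatFunc.X := by
    rw [hq, ArtinSchreier.poly, hcard]
  have hirr := ArtinSchreier.irreducible_poly_X (E := GaloisField p 2)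
  refine ⟨hirr, fun α hα ↦ ?_⟩
  let e := ArtinSchreier.autEquivMultiplicative hirr hα
  obtain ⟨l⟩ : Nonempty (GaloisField p 2 ≃ₗ[ZMod p] ZMod p × ZMod p) :=
    FiniteDimensional.nonempty_linearEquiv_of_finrank_eq <| by
      rw [GaloisField.finrank p two_ne_zero, Module.finrank_prod, Module.finrank_self]
  refine ⟨ArtinSchreier.isGalois_adjoin_simple hα, ?_, ⟨e⟩, ⟨e.trans l.toAddEquiv.toMultiplicative⟩⟩
  rw [ArtinSchreier.finrank_adjoin_simple hirr hα, hcard]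
end

section
/- For every prime p there exist a field F of characteristic p, a finite Galois extension K/F, and elements x, y ∈ K such that: F[x]/F and F[y]/F are Galois extensions of degree p, F[x] ∩ F[y] = F, K = F[x, y] has degree p² over F, and there exist nonzero α, β ∈ F with F[αx + βy] ≠ F[x, y]. In particular, condition (C3) (that the characteristic not divide gcd of the degrees) cannot be removed from the hypotheses guaranteeing F[x, y] = F[αx + βy] for all nonzero α, β ∈ F. -/
open IntermediateField Module
set_option maxHeartbeats 1000000
set_option synthInstance.maxHeartbeats 200000

section Pedo
variable (p : ℕ) [Fact p.Prime]

abbrev Rp := MvPolynomial (Fin 2) (ZMod p)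
abbrev Kp := FractionRing (Rp p)
abbrev Gp := Multiplicative (Fin 2 → ZMod p)

noncomputable def tr (c : Fin 2 → ZMod p) : Rp p →ₐ[ZMod p] Rp p :=
  MvPolynomial.aeval (fun i => MvPolynomial.X i + MvPolynomial.C (c i))

lemma tr_comp (c d : Fin 2 → ZMod p) : (tr p c).comp (tr p d) = tr p (c + d) := by
  apply MvPolynomial.algHom_ext
  intro i
  simp [tr, MvPolynomial.aeval_X, MvPolynomial.aeval_C, MvPolynomial.algebraMap_eq, add_assoc]

lemma tr_zero : tr p 0 = AlgHom.id _ _ := by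
  apply MvPolynomial.algHom_ext
  intro i
  simp [tr]

noncomputable def trE (c : Fin 2 → ZMod p) : Rp p ≃+* Rp p :=
  (AlgEquiv.ofAlgHom (tr p c) (tr p (-c))
    (by rw [tr_comp]; simp [tr_zero]) (by rw [tr_comp]; simp [tr_zero])).toRingEquiv

lemma trE_apply (c : Fin 2 → ZMod p) (r : Rp p) : trE p c r = tr p c r := rfl

lemma trE_X (c : Fin 2 → ZMod p) (i : Fin 2) :
    trE p c (MvPolynomial.X i) = MvPolynomial.X i + MvPolynomial.C (c i) := by
  simp [trE_apply, tr, MvPolynomial.aeval_X]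

lemma trE_trE (c d : Fin 2 → ZMod p) (r : Rp p) :
    trE p c (trE p d r) = trE p (c + d) r := by
  simp only [trE_apply]
  exact DFunLike.congr_fun (tr_comp p c d) r

lemma trE_map_nzd (c : Fin 2 → ZMod p) :
    (nonZeroDivisors (Rp p)).map (trE p c).toMonoidHom = nonZeroDivisors (Rp p) :=
  MulEquivClass.map_nonZeroDivisors (trE p c)

noncomputable def phi : Gp p →* RingAut (Kp p) where
  toFun c := IsLocalization.ringEquivOfRingEquiv (Kp p) (Kp p) (trE p c.toAdd) (trE_map_nzd p _)
  map_one' := by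
    apply RingEquiv.toRingHom_injective
    apply IsLocalization.ringHom_ext (nonZeroDivisors (Rp p))
    refine RingHom.ext fun r => ?_
    simp only [RingEquiv.toRingHom_eq_coe, RingHom.coe_comp, RingHom.coe_coe, Function.comp_apply]
    rw [IsLocalization.ringEquivOfRingEquiv_eq]
    show algebraMap (Rp p) (Kp p) (trE p 0 r) = algebraMap (Rp p) (Kp p) r
    rw [trE_apply, tr_zero]; rfl
  map_mul' a b := by
    apply RingEquiv.toRingHom_injective
    apply IsLocalization.ringHom_ext (nonZeroDivisors (Rp p))
    refine RingHom.ext fun r => ?_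
    simp only [RingEquiv.toRingHom_eq_coe, RingHom.coe_comp, RingHom.coe_coe, Function.comp_apply]
    rw [IsLocalization.ringEquivOfRingEquiv_eq]
    show algebraMap (Rp p) (Kp p) (trE p (a.toAdd + b.toAdd) r) =
      (IsLocalization.ringEquivOfRingEquiv (Kp p) (Kp p) (trE p a.toAdd) (trE_map_nzd p _))
        ((IsLocalization.ringEquivOfRingEquiv (Kp p) (Kp p) (trE p b.toAdd) (trE_map_nzd p _))
          (algebraMap (Rp p) (Kp p) r))
    rw [IsLocalization.ringEquivOfRingEquiv_eq, IsLocalization.ringEquivOfRingEquiv_eq,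
      trE_trE]

noncomputable instance instActG : MulSemiringAction (Gp p) (Kp p) :=
  MulSemiringAction.compHom _ (phi p)

lemma gsmul_def (g : Gp p) (z : Kp p) : g • z = phi p g z := rfl

lemma gsmul_algebraMap (g : Gp p) (r : Rp p) :
    g • (algebraMap (Rp p) (Kp p) r) = algebraMap (Rp p) (Kp p) (trE p g.toAdd r) := by
  rw [gsmul_def]
  exact IsLocalization.ringEquivOfRingEquiv_eq (trE_map_nzd p g.toAdd) r

instance : FaithfulSMul (Gp p) (Kp p) := by
  constructor
  intro a b h
  have h2 : ∀ i, trE p a.toAdd (MvPolynomial.X i) = trE p b.toAdd (MvPolynomial.X i) := by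
    intro i
    have := h (algebraMap (Rp p) (Kp p) (MvPolynomial.X i))
    rw [gsmul_algebraMap, gsmul_algebraMap] at this
    exact IsFractionRing.injective (Rp p) (Kp p) this
  have h3 : a.toAdd = b.toAdd := by
    funext i
    have := h2 i
    rw [trE_X, trE_X, add_right_inj] at this
    exact MvPolynomial.C_injective _ _ this
  exact Multiplicative.toAdd.injective h3

end Pedo

section Part2
variable (p : ℕ) [Fact p.Prime]

noncomputable abbrev Fp : Subfield (Kp p) := FixedPoints.subfield (Gp p) (Kp p)

noncomputable abbrev xx : Kp p := algebraMap (Rp p) (Kp p) (MvPolynomial.X 0)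
noncomputable abbrev yy : Kp p := algebraMap (Rp p) (Kp p) (MvPolynomial.X 1)
noncomputable abbrev kc (a : ZMod p) : Kp p := algebraMap (Rp p) (Kp p) (MvPolynomial.C a)

instance : CharP (Rp p) p :=
  charP_of_injective_algebraMap (by rw [MvPolynomial.algebraMap_eq]; exact MvPolynomial.C_injective _ _) p

instance : CharP (Kp p) p :=
  charP_of_injective_algebraMap (IsFractionRing.injective (Rp p) (Kp p)) p

instance : CharP (Fp p) p :=
  (Fp p).subtype.charP (Fp p).subtype_injective p

lemma card_Gp : Fintype.card (Gp p) = p ^ 2 := by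
  simp [Gp, Fintype.card_fun, ZMod.card, sq]

lemma finrank_Fp_Kp : finrank (Fp p) (Kp p) = p ^ 2 := by
  rw [FixedPoints.finrank_eq_card, card_Gp]

lemma gsmul_x (g : Gp p) : g • xx p = xx p + kc p (g.toAdd 0) := by
  rw [xx, gsmul_algebraMap, trE_X, map_add]

lemma gsmul_y (g : Gp p) : g • yy p = yy p + kc p (g.toAdd 1) := by
  rw [yy, gsmul_algebraMap, trE_X, map_add]

lemma kc_zero : kc p 0 = 0 := by simp
lemma kc_one : kc p 1 = 1 := by simp
lemma kc_add (a b : ZMod p) : kc p (a + b) = kc p a + kc p b := by rw [kc, map_add, map_add]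
lemma kc_pow_card (a : ZMod p) : (kc p a) ^ p = kc p a := by
  rw [kc, ← map_pow, ← map_pow, ZMod.pow_card a]

lemma mem_Fp_iff (z : Kp p) : z ∈ Fp p ↔ ∀ g : Gp p, g • z = z := Iff.rfl

/-- if every translate of w is w + constant, then w^p - w is fixed -/
lemma AS_mem (w : Kp p) (h : ∀ g : Gp p, ∃ s : ZMod p, g • w = w + kc p s) :
    w ^ p - w ∈ Fp p := by
  intro g
  obtain ⟨s, hs⟩ := h g
  rw [smul_sub, smul_pow', hs, add_pow_char, kc_pow_card]
  ring

end Part2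

section Part3
variable (p : ℕ) [Fact p.Prime]

open Polynomial

noncomputable def fixedIF (g : Gp p) : IntermediateField (Fp p) (Kp p) where
  carrier := {z | g • z = z}
  mul_mem' := fun {a b} ha hb => by
    simp only [Set.mem_setOf_eq] at *; rw [smul_mul', ha, hb]
  add_mem' := fun {a b} ha hb => by
    simp only [Set.mem_setOf_eq] at *; rw [smul_add, ha, hb]
  algebraMap_mem' := fun f => f.2 g
  inv_mem' := fun z hz => by
    simp only [Set.mem_setOf_eq] at *; rw [smul_inv'', hz]

lemma mem_fixedIF {g : Gp p} {z : Kp p} : z ∈ fixedIF p g ↔ g • z = z := Iff.rfl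

lemma adjoin_le_fixedIF (g : Gp p) (S : Set (Kp p)) (h : ∀ z ∈ S, g • z = z) :
    IntermediateField.adjoin (Fp p) S ≤ fixedIF p g :=
  IntermediateField.adjoin_le_iff.mpr h

noncomputable def σp : Gp p := Multiplicative.ofAdd ![1, 0]
noncomputable def τp : Gp p := Multiplicative.ofAdd ![0, 1]

lemma σ_x : σp p • xx p = xx p + 1 := by
  rw [gsmul_x]; simp [σp, kc_one]
lemma σ_y : σp p • yy p = yy p := by
  rw [gsmul_y]; simp [σp, kc_zero]
lemma τ_x : τp p • xx p = xx p := by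
  rw [gsmul_x]; simp [τp, kc_zero]
lemma τ_y : τp p • yy p = yy p + 1 := by
  rw [gsmul_y]; simp [τp, kc_one]

lemma x_not_bot : xx p ∉ (⊥ : IntermediateField (Fp p) (Kp p)) := by
  intro hx
  have h1 : xx p ∈ fixedIF p (σp p) :=
    (bot_le : (⊥ : IntermediateField (Fp p) (Kp p)) ≤ _) hx
  rw [mem_fixedIF, σ_x, add_eq_left] at h1
  exact one_ne_zero h1

lemma y_not_adjx : yy p ∉ IntermediateField.adjoin (Fp p) {xx p} := by
  intro hy
  have h1 : yy p ∈ fixedIF p (τp p) :=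
    adjoin_le_fixedIF p _ _ (by rintro z rfl; exact τ_x p) hy
  rw [mem_fixedIF, τ_y, add_eq_left] at h1
  exact one_ne_zero h1

lemma x_not_adjy : xx p ∉ IntermediateField.adjoin (Fp p) {yy p} := by
  intro hx
  have h1 : xx p ∈ fixedIF p (σp p) :=
    adjoin_le_fixedIF p _ _ (by rintro z rfl; exact σ_y p) hx
  rw [mem_fixedIF, σ_x, add_eq_left] at h1
  exact one_ne_zero h1

lemma AS_x : xx p ^ p - xx p ∈ Fp p :=
  AS_mem p _ (fun g => ⟨g.toAdd 0, gsmul_x p g⟩)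

lemma AS_y : yy p ^ p - yy p ∈ Fp p :=
  AS_mem p _ (fun g => ⟨g.toAdd 1, gsmul_y p g⟩)

lemma AS_xy : (xx p + yy p) ^ p - (xx p + yy p) ∈ Fp p := by
  refine AS_mem p _ (fun g => ⟨g.toAdd 0 + g.toAdd 1, ?_⟩)
  rw [smul_add, gsmul_x, gsmul_y, kc_add]; ring

/-- degree bound from Artin-Schreier relation -/
lemma finrank_adjoin_le (w : Kp p) (hw : w ^ p - w ∈ Fp p) :
    finrank (Fp p) (IntermediateField.adjoin (Fp p) {w}) ≤ p := by
  have hp2 : 2 ≤ p := (Fact.out : p.Prime).two_le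
  set c : Fp p := ⟨w ^ p - w, hw⟩ with hc
  set q : Polynomial (Fp p) := X ^ p - (X + C c) with hq
  have hmonic : q.Monic := by
    apply monic_X_pow_sub
    calc degree (X + C c) = 1 := degree_X_add_C c
    _ < (p : WithBot ℕ) := by exact_mod_cast Nat.lt_of_lt_of_le one_lt_two hp2
  have hroot : Polynomial.aeval w q = 0 := by
    have : (algebraMap (Fp p) (Kp p)) c = w ^ p - w := rfl
    simp [hq, this]
  have hint : IsIntegral (Fp p) w := ⟨q, hmonic, hroot⟩
  rw [IntermediateField.adjoin.finrank hint]
  have hdle : (minpoly (Fp p) w).degree ≤ q.degree :=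
    minpoly.degree_le_of_ne_zero _ _ hmonic.ne_zero hroot
  have hqdeg : q.natDegree ≤ p := by
    refine le_trans (natDegree_sub_le _ _) ?_
    rw [natDegree_X_pow, natDegree_X_add_C]
    omega
  calc (minpoly (Fp p) w).natDegree ≤ q.natDegree := natDegree_le_natDegree hdle
  _ ≤ p := hqdeg

end Part3

section P
variable (p : ℕ) [Fact p.Prime]

lemma pp2 : 2 ≤ p := (Fact.out : p.Prime).two_le

lemma finrank_dvd_sq (E : IntermediateField (Fp p) (Kp p)) :
    finrank (Fp p) E ∣ p ^ 2 := by
  rw [← finrank_Fp_Kp p]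
  exact ⟨finrank E (Kp p), (Module.finrank_mul_finrank (Fp p) E (Kp p)).symm⟩

lemma finrank_ge (E : IntermediateField (Fp p) (Kp p)) (hE : E ≠ ⊥) :
    p ≤ finrank (Fp p) E := by
  obtain ⟨k, hk2, hk⟩ := (Nat.dvd_prime_pow (Fact.out : p.Prime)).mp (finrank_dvd_sq p E)
  have h1 : finrank (Fp p) E ≠ 1 := fun h => hE (IntermediateField.finrank_eq_one_iff.mp h)
  interval_cases k
  · rw [pow_zero] at hk; exact absurd hk h1
  · rw [hk, pow_one]
  · rw [hk]; exact Nat.le_self_pow (by norm_num) p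

lemma adjx_ne_bot : IntermediateField.adjoin (Fp p) {xx p} ≠ ⊥ := fun h =>
  x_not_bot p (h ▸ IntermediateField.mem_adjoin_simple_self (Fp p) (xx p))

lemma finrank_adjx : finrank (Fp p) (IntermediateField.adjoin (Fp p) {xx p}) = p :=
  le_antisymm (finrank_adjoin_le p _ (AS_x p)) (finrank_ge p _ (adjx_ne_bot p))

lemma adjy_ne_bot : IntermediateField.adjoin (Fp p) {yy p} ≠ ⊥ := by
  intro h
  have h0 := h ▸ IntermediateField.mem_adjoin_simple_self (Fp p) (yy p)
  rw [IntermediateField.mem_bot] at h0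
  obtain ⟨f, hf⟩ := h0
  have h1 : τp p • yy p = yy p := hf ▸ f.2 (τp p)
  rw [τ_y, add_eq_left] at h1
  exact one_ne_zero h1

lemma finrank_adjy : finrank (Fp p) (IntermediateField.adjoin (Fp p) {yy p}) = p :=
  le_antisymm (finrank_adjoin_le p _ (AS_y p)) (finrank_ge p _ (adjy_ne_bot p))

lemma inf_bot :
    IntermediateField.adjoin (Fp p) {xx p} ⊓ IntermediateField.adjoin (Fp p) {yy p} = ⊥ := by
  by_contra h
  have hge := finrank_ge p _ h
  have h1 : IntermediateField.adjoin (Fp p) {xx p} ⊓ IntermediateField.adjoin (Fp p) {yy p}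
      = IntermediateField.adjoin (Fp p) {xx p} :=
    IntermediateField.eq_of_le_of_finrank_le inf_le_left (le_trans (le_of_eq (finrank_adjx p)) hge)
  have h2 : IntermediateField.adjoin (Fp p) {xx p} ⊓ IntermediateField.adjoin (Fp p) {yy p}
      = IntermediateField.adjoin (Fp p) {yy p} :=
    IntermediateField.eq_of_le_of_finrank_le inf_le_right (le_trans (le_of_eq (finrank_adjy p)) hge)
  have h3 := h1.symm.trans h2
  have h4 := IntermediateField.mem_adjoin_simple_self (Fp p) (yy p)
  rw [← h3] at h4
  exact y_not_adjx p h4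
end P

section P2
variable (p : ℕ) [Fact p.Prime]

lemma adjxy_top : IntermediateField.adjoin (Fp p) {xx p, yy p} = ⊤ := by
  set E := IntermediateField.adjoin (Fp p) {xx p, yy p} with hE
  have hxE : xx p ∈ E := IntermediateField.subset_adjoin _ _ (by simp)
  have hyE : yy p ∈ E := IntermediateField.subset_adjoin _ _ (by simp)
  have hxle : IntermediateField.adjoin (Fp p) {xx p} ≤ E :=
    IntermediateField.adjoin_simple_le_iff.mpr hxE
  have hgt : p < finrank (Fp p) E := by
    rcases lt_or_ge p (finrank (Fp p) E) with h | h
    · exact h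
    · exfalso
      have h5 : E = IntermediateField.adjoin (Fp p) {xx p} :=
        (IntermediateField.eq_of_le_of_finrank_le hxle
          (le_trans h (le_of_eq (finrank_adjx p).symm))).symm
      rw [h5] at hyE
      exact y_not_adjx p hyE
  obtain ⟨k, hk2, hk⟩ := (Nat.dvd_prime_pow (Fact.out : p.Prime)).mp (finrank_dvd_sq p E)
  have hp2 := pp2 p
  have hsq : finrank (Fp p) E = p ^ 2 := by
    interval_cases k
    · rw [pow_zero] at hk; omega
    · rw [pow_one] at hk; omega
    · exact hk
  refine IntermediateField.eq_of_le_of_finrank_le le_top ?_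
  rw [IntermediateField.finrank_top', finrank_Fp_Kp, hsq]

lemma gal_comm (a b : Kp p ≃ₐ[Fp p] Kp p) : a * b = b * a := by
  obtain ⟨ga, rfl⟩ := FixedPoints.toAlgAut_surjective (Gp p) (Kp p) a
  obtain ⟨gb, rfl⟩ := FixedPoints.toAlgAut_surjective (Gp p) (Kp p) b
  rw [← map_mul, ← map_mul, mul_comm]

lemma gal_normal (H : Subgroup (Kp p ≃ₐ[Fp p] Kp p)) : H.Normal := by
  constructor
  intro n hn g
  have h : g * n * g⁻¹ = n := by
    rw [gal_comm p g n, mul_assoc, mul_inv_cancel, mul_one]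
  rw [h]
  exact hn

lemma isGalois_IF (E : IntermediateField (Fp p) (Kp p)) : IsGalois (Fp p) E := by
  haveI := gal_normal p E.fixingSubgroup
  have h := IsGalois.fixedField_fixingSubgroup E
  have inst := IsGalois.of_fixedField_normal_subgroup (K := Fp p) (L := Kp p) E.fixingSubgroup
  rwa [h] at inst

lemma xy_ne : IntermediateField.adjoin (Fp p) {xx p + yy p} ≠
    IntermediateField.adjoin (Fp p) {xx p, yy p} := by
  intro h
  have h1 := finrank_adjoin_le p _ (AS_xy p)
  rw [h, adjxy_top, IntermediateField.finrank_top', finrank_Fp_Kp] at h1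
  have := pp2 p
  nlinarith
end P2

/-- **Example (pedo), conclusion.** For every prime `p` there exist a field `F` of
characteristic `p`, a finite Galois extension `K/F`, and `x, y ∈ K` such that `F[x]/F`
and `F[y]/F` are Galois of degree `p`, `F[x] ∩ F[y] = F`, `K = F[x, y]` has degree `p²`
over `F`, and `F[αx + βy] ≠ F[x, y]` for some nonzero `α, β ∈ F`.  In particular,
condition (C3) cannot be removed. -/
theorem stmt3 (p : ℕ) (hp : p.Prime) :
    ∃ (F : Type) (_ : Field F) (K : Type) (_ : Field K) (_ : Algebra F K),
      CharP F p ∧ FiniteDimensional F K ∧ IsGalois F K ∧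
      ∃ x y : K,
        IsGalois F (IntermediateField.adjoin F {x}) ∧
        IsGalois F (IntermediateField.adjoin F {y}) ∧
        Module.finrank F (IntermediateField.adjoin F {x}) = p ∧
        Module.finrank F (IntermediateField.adjoin F {y}) = p ∧
        IntermediateField.adjoin F {x} ⊓ IntermediateField.adjoin F {y} = ⊥ ∧
        IntermediateField.adjoin F {x, y} = ⊤ ∧
        Module.finrank F K = p ^ 2 ∧
        ∃ α β : F, α ≠ 0 ∧ β ≠ 0 ∧
          IntermediateField.adjoin F {α • x + β • y} ≠
            IntermediateField.adjoin F {x, y} := by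
  haveI : Fact p.Prime := ⟨hp⟩
  refine ⟨Fp p, inferInstance, Kp p, inferInstance, inferInstance,
    inferInstance, inferInstance, inferInstance,
    xx p, yy p, isGalois_IF p _, isGalois_IF p _, finrank_adjx p, finrank_adjy p,
    inf_bot p, adjxy_top p, finrank_Fp_Kp p,
    1, 1, one_ne_zero, one_ne_zero, ?_⟩
  rw [one_smul, one_smul]
  exact xy_ne p
end

section
/- Let K/F be a field extension and let x, y ∈ K have degrees a = md and b = nd over F, where d = gcd(a, b). Assume that F[x]/F and F[y]/F are finite Galois extensions and that K = F[x, y] has degree mnd = lcm(a, b) over F. Let E = F[x] ∩ F[y]. Then for all nonzero α, β ∈ F the element z = αx + βy satisfies K = E[z]; that is, z has degree mn over E. -/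
/-!
In `Gal(K/F)`, the subgroups `H₁ = Gal(K/F⟮x⟯)` and `H₂ = Gal(K/F⟮y⟯)` are normal of coprime
orders `n` and `m`, and `Gal(K/E) = H₁ H₂` has order `mn`. Let `σ ∈ Gal(K/E)` fix
`z = αx + βy`. Then `c = σx - x ∈ F⟮x⟯` is a nonzero-scalar multiple of `σy - y ∈ F⟮y⟯`, so
`c ∈ E` is fixed by `σ`, and `σᵏ` translates `x` by `k • c` and `y` by `k` times that multiple
of `c`. As `σᵐ ∈ H₁` and `σⁿ ∈ H₂`, both `m • c` and `n • c` vanish, so `c = 0`. Hence `σ`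
fixes `x` and `y`, i.e. `σ = 1`, and `E⟮z⟯ = K` by the Galois correspondence.
-/

open IntermediateField Module

namespace Subgroup

variable {G : Type*} [Group G]

theorem pow_card_mem_of_mem_sup (N H : Subgroup G) [N.Normal] {g : G} (hg : g ∈ N ⊔ H) :
    g ^ Nat.card H ∈ N := by
  rw [← SetLike.mem_coe, normal_mul] at hg
  obtain ⟨a, ha, b, hb, rfl⟩ := hg
  rw [← QuotientGroup.eq_one_iff, QuotientGroup.mk_pow, QuotientGroup.mk_mul,
    (QuotientGroup.eq_one_iff a).mpr ha, one_mul, ← QuotientGroup.mk_pow,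
    show b ^ Nat.card H = 1 from congr_arg Subtype.val (pow_card_eq_one' (x := ⟨b, hb⟩)),
    QuotientGroup.mk_one]

theorem card_sup_eq_mul_of_coprime [Finite G] (N H : Subgroup G) [N.Normal]
    (h : (Nat.card N).Coprime (Nat.card H)) :
    Nat.card ↥(N ⊔ H) = Nat.card N * Nat.card H := by
  refine le_antisymm ?_ (Nat.le_of_dvd Nat.card_pos ?_)
  · rw [← SetLike.coe_sort_coe, normal_mul]
    exact Set.natCard_mul_le
  · exact h.mul_dvd_of_dvd_of_dvd (card_dvd_of_le le_sup_left) (card_dvd_of_le le_sup_right)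

end Subgroup

theorem eq_zero_of_nsmul_eq_zero_of_coprime {M : Type*} [AddMonoid M] {m n : ℕ}
    (h : m.Coprime n) {c : M} (hm : m • c = 0) (hn : n • c = 0) : c = 0 :=
  AddMonoid.addOrderOf_eq_one_iff.mp <| Nat.dvd_one.mp <| h.gcd_eq_one ▸
    Nat.dvd_gcd (addOrderOf_dvd_of_nsmul_eq_zero hm) (addOrderOf_dvd_of_nsmul_eq_zero hn)

theorem AlgEquiv.pow_apply_eq_add_nsmul {R A : Type*} [CommSemiring R] [Semiring A]
    [Algebra R A] (σ : A ≃ₐ[R] A) {u c : A} (hu : σ u = u + c) (hc : σ c = c) (k : ℕ) :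
    (σ ^ k) u = u + k • c := by
  induction k with
  | zero => simp
  | succ k ih =>
    rw [pow_succ', AlgEquiv.mul_apply, ih, map_add, hu, map_nsmul, hc, succ_nsmul]
    abel

namespace IntermediateField

variable {F K : Type*} [Field F] [Field K] [Algebra F K]

theorem mem_fixingSubgroup_adjoin_iff (σ : Gal(K/F)) (s : Set K) :
    σ ∈ (adjoin F s).fixingSubgroup ↔ ∀ x ∈ s, σ x = x := by
  simp only [← Subgroup.zpowers_le, ← le_iff_le, adjoin_le_iff, Set.subset_def]
  refine forall₂_congr fun x _ => ?_
  rw [SetLike.mem_coe, mem_fixedField_iff]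
  exact ⟨fun h => h σ (Subgroup.mem_zpowers σ),
    fun h _ hf => (Subgroup.zpowers_le (H := MulAction.stabilizer Gal(K/F) x)).mpr h hf⟩

instance fixingSubgroup_normal_of_normal (L : IntermediateField F K) [Normal F L] :
    L.fixingSubgroup.Normal :=
  L.restrictNormalHom_ker ▸ (AlgEquiv.restrictNormalHom L).normal_ker

theorem apply_mem_of_normal (L : IntermediateField F K) [Normal F L] (σ : Gal(K/F)) {x : K}
    (hx : x ∈ L) : σ x ∈ L :=
  AlgEquiv.restrictNormal_apply L σ ⟨x, hx⟩ ▸ (σ.restrictNormal L ⟨x, hx⟩).2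

variable [FiniteDimensional F K] [IsGalois F K]

theorem fixingSubgroup_inf (L₁ L₂ : IntermediateField F K) :
    (L₁ ⊓ L₂).fixingSubgroup = L₁.fixingSubgroup ⊔ L₂.fixingSubgroup :=
  (IsGalois.intermediateFieldEquivSubgroup (F := F) (E := K)).map_inf L₁ L₂

theorem finrank_inf_eq_mul_of_coprime (L₁ L₂ : IntermediateField F K) [Normal F L₁]
    (h : (finrank L₁ K).Coprime (finrank L₂ K)) :
    finrank ↥(L₁ ⊓ L₂) K = finrank L₁ K * finrank L₂ K := by
  simp only [← IsGalois.card_fixingSubgroup_eq_finrank] at h ⊢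
  rw [fixingSubgroup_inf]
  exact Subgroup.card_sup_eq_mul_of_coprime _ _ h

variable {L₁ L₂ : IntermediateField F K} [Normal F L₁] [Normal F L₂] {x y : K} {α β : F}

theorem eq_one_of_mem_fixingSubgroup_inf_of_fixes_add_smul
    (hcop : (finrank L₁ K).Coprime (finrank L₂ K)) (hx : x ∈ L₁) (hy : y ∈ L₂)
    (hxy : adjoin F {x, y} = ⊤) (hα : α ≠ 0) (hβ : β ≠ 0) (σ : Gal(K/F))
    (hσE : σ ∈ (L₁ ⊓ L₂).fixingSubgroup) (hσz : σ (α • x + β • y) = α • x + β • y) :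
    σ = 1 := by
  set γ : F := -(β⁻¹ * α)
  set c := σ x - x
  have hγ : γ ≠ 0 := by simp [γ, hα, hβ]
  have hσx : σ x = x + c := by simp [c]
  have hσy : σ y = y + γ • c := by
    rw [map_add, map_smul, map_smul] at hσz
    refine (sub_eq_iff_eq_add').mp (smul_right_injective K hβ ?_)
    simp only [γ, c, smul_smul, mul_neg, ← mul_assoc, mul_inv_cancel₀ hβ, one_mul]
    linear_combination (norm := module) hσz
  have hcL₂ : c ∈ L₂ := by
    rw [← inv_smul_smul₀ hγ c, ← add_sub_cancel_left y (γ • c), ← hσy]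
    exact smul_mem _ (sub_mem (apply_mem_of_normal L₂ σ hy) hy)
  have hc : c ∈ L₁ ⊓ L₂ := ⟨sub_mem (apply_mem_of_normal L₁ σ hx) hx, hcL₂⟩
  have hσc : σ c = c := (mem_fixingSubgroup_iff _ σ).mp hσE c hc
  rw [fixingSubgroup_inf] at hσE
  have hm : Nat.card L₂.fixingSubgroup • c = 0 := by
    have := (mem_fixingSubgroup_iff _ _).mp
      (Subgroup.pow_card_mem_of_mem_sup _ _ hσE) x hx
    rwa [σ.pow_apply_eq_add_nsmul hσx hσc, add_eq_left] at this
  have hn : Nat.card L₁.fixingSubgroup • c = 0 := by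
    have := (mem_fixingSubgroup_iff _ _).mp
      (Subgroup.pow_card_mem_of_mem_sup _ _ (sup_comm L₁.fixingSubgroup _ ▸ hσE)) y hy
    rwa [σ.pow_apply_eq_add_nsmul hσy (by rw [map_smul, hσc]), add_eq_left, smul_comm,
      smul_eq_zero, or_iff_right hγ] at this
  simp only [← IsGalois.card_fixingSubgroup_eq_finrank] at hcop
  have hc0 : c = 0 := eq_zero_of_nsmul_eq_zero_of_coprime hcop hn hm
  rw [← Subgroup.mem_bot, ← fixingSubgroup_top, ← hxy, mem_fixingSubgroup_adjoin_iff]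
  simp [hσx, hσy, hc0]

theorem adjoin_inf_add_smul_eq_top (hcop : (finrank L₁ K).Coprime (finrank L₂ K))
    (hx : x ∈ L₁) (hy : y ∈ L₂) (hxy : adjoin F {x, y} = ⊤) (hα : α ≠ 0) (hβ : β ≠ 0) :
    adjoin ↥(L₁ ⊓ L₂) {α • x + β • y} = ⊤ := by
  let M := (adjoin ↥(L₁ ⊓ L₂) {α • x + β • y}).restrictScalars F
  have hle : L₁ ⊓ L₂ ≤ M := fun k hk => algebraMap_mem _ (⟨k, hk⟩ : ↥(L₁ ⊓ L₂))
  have hM : M.fixingSubgroup = ⊥ := by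
    refine (Subgroup.eq_bot_iff_forall _).mpr fun σ hσ =>
      eq_one_of_mem_fixingSubgroup_inf_of_fixes_add_smul hcop hx hy hxy hα hβ σ
        (fixingSubgroup_antitone hle hσ) ?_
    exact (mem_fixingSubgroup_iff _ σ).mp hσ _ (mem_adjoin_simple_self ↥(L₁ ⊓ L₂) _)
  rw [← restrictScalars_eq_top_iff (K := F)]
  change M = ⊤
  rw [← IsGalois.fixedField_fixingSubgroup M, hM, fixedField_bot]

end IntermediateField

/-- **Theorem (t).** Let `K/F` be a field extension and `x, y ∈ K` of degrees `a = md`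
and `b = nd` over `F`, where `d = gcd(a, b)`.  Assume `F[x]/F` and `F[y]/F` are finite
Galois extensions and `K = F[x, y]` has degree `mnd = lcm(a, b)` over `F`.  Let
`E = F[x] ∩ F[y]`.  Then for all nonzero `α, β ∈ F` the element `z = αx + βy` satisfies
`K = E[z]`, i.e. `z` has degree `mn` over `E`. -/
theorem stmt4 (F K : Type*) [Field F] [Field K] [Algebra F K]
    (x y : K) (a b d m n : ℕ)
    (hd : d = Nat.gcd a b) (ha : a = m * d) (hb : b = n * d)
    (hdegx : Module.finrank F (IntermediateField.adjoin F {x}) = a)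
    (hdegy : Module.finrank F (IntermediateField.adjoin F {y}) = b)
    (hfinx : FiniteDimensional F (IntermediateField.adjoin F {x}))
    (hfiny : FiniteDimensional F (IntermediateField.adjoin F {y}))
    (hGx : IsGalois F (IntermediateField.adjoin F {x}))
    (hGy : IsGalois F (IntermediateField.adjoin F {y}))
    (hK : IntermediateField.adjoin F {x, y} = ⊤)
    (hdegK : Module.finrank F K = m * n * d)
    (E : IntermediateField F K)
    (hE : E = IntermediateField.adjoin F {x} ⊓ IntermediateField.adjoin F {y}) :
    ∀ α β : F, α ≠ 0 → β ≠ 0 →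
      IntermediateField.adjoin E {α • x + β • y} = (⊤ : IntermediateField E K) ∧
      Module.finrank E (IntermediateField.adjoin E {α • x + β • y}) = m * n := by
  intro α β hα hβ
  subst hE ha hb
  have hsup : F⟮x⟯ ⊔ F⟮y⟯ = ⊤ := by rw [← adjoin_union, Set.singleton_union, hK]
  have : FiniteDimensional F (⊤ : IntermediateField F K) := hsup ▸ finiteDimensional_sup _ _
  have : FiniteDimensional F K := topEquiv.toLinearEquiv.finiteDimensional
  have : IsGalois F K := isGalois_iff_isGalois_top.mp (hsup ▸ inferInstance)
  have hmd : 0 < m * d := hdegx ▸ finrank_pos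
  have hnd : 0 < n * d := hdegy ▸ finrank_pos
  have hcop : m.Coprime n := by
    rw [Nat.gcd_mul_right] at hd
    exact Nat.eq_of_mul_eq_mul_right (Nat.pos_of_mul_pos_left hmd) (by rw [← hd, one_mul])
  have hKx : finrank F⟮x⟯ K = n := by
    have h := finrank_mul_finrank F F⟮x⟯ K
    rw [hdegx, hdegK] at h
    exact Nat.eq_of_mul_eq_mul_left hmd (h.trans (by ring))
  have hKy : finrank F⟮y⟯ K = m := by
    have h := finrank_mul_finrank F F⟮y⟯ K
    rw [hdegy, hdegK] at h
    exact Nat.eq_of_mul_eq_mul_left hnd (h.trans (by ring))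
  have hcop' : (finrank F⟮x⟯ K).Coprime (finrank F⟮y⟯ K) := hKx ▸ hKy ▸ hcop.symm
  have htop := adjoin_inf_add_smul_eq_top hcop' (mem_adjoin_simple_self F x)
    (mem_adjoin_simple_self F y) hK hα hβ
  refine ⟨htop, ?_⟩
  rw [htop, finrank_top', finrank_inf_eq_mul_of_coprime _ _ hcop', hKx, hKy, mul_comm]
end

section
/- Let q be a prime power, let F be a field with q elements, and let A ≥ q − 1 be an integer. Then there exist positive integers a, b and elements x, y in some finite extension K of F such that: x has degree a over F, y has degree b over F, d = gcd(a, b) has exactly A distinct prime factors that do not divide (a/d)·(b/d), and for all α, β ∈ F one has F[αx + βy] ≠ F[x, y]; that is, no F-linear combination of x and y generates F[x, y] over F. -/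
/-!
Over a finite field `F`, an element `z` of a finite extension has degree dividing `e` iff it is
fixed by the `e`-th power of Frobenius, so such elements form a subalgebra. Taking elements `u i`
of pairwise distinct prime degrees `p i`, it follows that `∑ c i • u i` has degree
`∏_{c i ≠ 0} p i`. Put `x = ∑ a i • u i` and `y = ∑ b i • u i`, where the vectors `(a i, b i)`
are `(1, 0)`, `(0, 1)`, `(1, -γ)` for `γ ∈ Fˣ`, and enough copies of `(1, 1)` to make exactly `A`
primes common to both degrees. Every `α • x + β • y` annihilates one of these vectors, so its
degree misses the corresponding prime, which does divide `[F(x, y) : F]`.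
-/

universe u

open Module IntermediateField
open scoped IntermediateField

section InjectivePrimes

variable {ι : Type*} {p : ι → ℕ} (hp : ∀ i, (p i).Prime) (hinj : Function.Injective p)
include hp hinj

theorem Nat.prime_dvd_prod_iff_mem {s : Finset ι} {i : ι} : p i ∣ ∏ j ∈ s, p j ↔ i ∈ s := by
  refine ⟨fun h => ?_, fun h => Finset.dvd_prod_of_mem p h⟩
  obtain ⟨j, hj, hij⟩ := ((hp i).prime.dvd_finsetProd_iff _).1 h
  rwa [hinj ((Nat.prime_dvd_prime_iff_eq (hp i) (hp j)).1 hij)]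

theorem Nat.prod_dvd_of_forall_prime_dvd {s : Finset ι} {n : ℕ} (h : ∀ i ∈ s, p i ∣ n) :
    ∏ i ∈ s, p i ∣ n := by
  classical
  induction s using Finset.induction_on with
  | empty => simp
  | insert i s hi ih =>
    rw [Finset.prod_insert hi]
    refine Nat.Coprime.mul_dvd_of_dvd_of_dvd ?_ (h i (Finset.mem_insert_self i s))
      (ih fun j hj => h j (Finset.mem_insert_of_mem hj))
    exact (hp i).coprime_iff_not_dvd.2 fun hdvd =>
      hi ((Nat.prime_dvd_prod_iff_mem hp hinj).1 hdvd)

theorem Nat.card_primeFactors_gcd_filter_not_dvd [DecidableEq ι] (s t : Finset ι) :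
    ((Nat.gcd (∏ i ∈ s, p i) (∏ i ∈ t, p i)).primeFactors.filter fun r =>
      ¬ r ∣ (∏ i ∈ s, p i) / Nat.gcd (∏ i ∈ s, p i) (∏ i ∈ t, p i) *
        ((∏ i ∈ t, p i) / Nat.gcd (∏ i ∈ s, p i) (∏ i ∈ t, p i))).card = (s ∩ t).card := by
  have hs : ∏ i ∈ s, p i = (∏ i ∈ s ∩ t, p i) * ∏ i ∈ s \ t, p i :=
    (Finset.prod_inter_mul_prod_sdiff s t p).symm
  have ht : ∏ i ∈ t, p i = (∏ i ∈ s ∩ t, p i) * ∏ i ∈ t \ s, p i := by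
    rw [Finset.inter_comm]; exact (Finset.prod_inter_mul_prod_sdiff t s p).symm
  have hcop : Nat.Coprime (∏ i ∈ s \ t, p i) (∏ i ∈ t \ s, p i) :=
    Nat.Coprime.prod_left fun i hi => Nat.Coprime.prod_right fun j hj =>
      (Nat.coprime_primes (hp i) (hp j)).2 <| hinj.ne <| by
        rintro rfl; exact (Finset.mem_sdiff.1 hi).2 (Finset.mem_sdiff.1 hj).1
  have hpos : 0 < ∏ i ∈ s ∩ t, p i := Finset.prod_pos fun i _ => (hp i).pos
  have hfactors : (∏ i ∈ s ∩ t, p i).primeFactors = (s ∩ t).image p := by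
    have hprime : ∀ r ∈ (s ∩ t).image p, r.Prime := by
      simp only [Finset.mem_image]
      rintro _ ⟨i, -, rfl⟩
      exact hp i
    rw [← Nat.primeFactors_prod hprime, Finset.prod_image fun i _ j _ h => hinj h]
  rw [hs, ht, Nat.gcd_mul_left, hcop, mul_one, Nat.mul_div_cancel_left _ hpos,
    Nat.mul_div_cancel_left _ hpos, hfactors, Finset.filter_true_of_mem,
    Finset.card_image_of_injective _ hinj]
  simp only [Finset.mem_image, Finset.mem_inter]
  rintro _ ⟨i, ⟨his, hit⟩, rfl⟩ hdvd
  rcases (hp i).dvd_mul.1 hdvd with h | h <;>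
    simp [Nat.prime_dvd_prod_iff_mem hp hinj, his, hit] at h

end InjectivePrimes

namespace FiniteField

open Polynomial in
theorem exists_finrank_eq (F : Type u) [Field F] [Finite F] {n : ℕ} (hn : n ≠ 0) :
    ∃ (K : Type u) (_ : Field K) (_ : Algebra F K), Finite K ∧ finrank F K = n := by
  have : Fact (ringChar F).Prime := ⟨CharP.char_is_prime F _⟩
  have : NeZero n := ⟨hn⟩
  let f : F[X] := X ^ Nat.card F ^ n - X
  let φ := IsSplittingField.algEquiv (Extension F (ringChar F) n) f
  exact ⟨f.SplittingField, inferInstance, inferInstance, Finite.of_equiv _ φ.toEquiv,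
    φ.toLinearEquiv.finrank_eq.symm.trans (finrank_extension F _ n)⟩

variable (F K : Type*) [Field F] [Fintype F] [Field K] [Algebra F K]

theorem frobeniusAlgHom_pow_apply (e : ℕ) (z : K) :
    (frobeniusAlgHom F K ^ e) z = z ^ Fintype.card F ^ e := by
  rw [AlgHom.coe_pow, coe_frobeniusAlgHom, pow_iterate]

abbrev fixedByFrobeniusPow (e : ℕ) : Subalgebra F K :=
  (frobeniusAlgHom F K ^ e).equalizer (AlgHom.id F K)

variable {F K} [Finite K]

theorem mem_fixedByFrobeniusPow_iff {z : K} {e : ℕ} :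
    z ∈ fixedByFrobeniusPow F K e ↔ finrank F F⟮z⟯ ∣ e := by
  rw [← orderOf_frobeniusAlgHom F F⟮z⟯, orderOf_dvd_iff_pow_eq_one, AlgHom.mem_equalizer,
    AlgHom.id_apply]
  have hcoe (w : F⟮z⟯) : ((frobeniusAlgHom F F⟮z⟯ ^ e) w : K) = (frobeniusAlgHom F K ^ e) w := by
    simp only [frobeniusAlgHom_pow_apply, IntermediateField.coe_pow]
  constructor
  · intro h
    refine adjoin_algHom_ext F fun x hx => ?_
    rw [Set.mem_singleton_iff] at hx
    subst hx
    exact Subtype.ext ((hcoe _).trans h)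
  · intro h
    simpa [h] using (hcoe (AdjoinSimple.gen F z)).symm

theorem finrank_adjoin_sum_smul [DecidableEq F] {ι : Type*} [Fintype ι] {p : ι → ℕ}
    (hp : ∀ i, (p i).Prime) (hinj : Function.Injective p) {u : ι → K}
    (hu : ∀ i, finrank F F⟮u i⟯ = p i) (c : ι → F) :
    finrank F F⟮∑ i, c i • u i⟯ = ∏ i with c i ≠ 0, p i := by
  classical
  set z := ∑ i, c i • u i
  set t := ({i | c i ≠ 0} : Finset ι)
  have hz : z = ∑ i ∈ t, c i • u i :=
    (Finset.sum_filter_of_ne fun i _ hi => left_ne_zero_of_smul hi).symm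
  have hmem : ∀ e i, p i ∣ e → u i ∈ fixedByFrobeniusPow F K e := fun e i h =>
    mem_fixedByFrobeniusPow_iff.2 (hu i ▸ h)
  refine Nat.dvd_antisymm (mem_fixedByFrobeniusPow_iff.1 ?_) ?_
  · rw [hz]
    exact Subalgebra.sum_mem _ fun i hi =>
      Subalgebra.smul_mem _ (hmem _ i (Finset.dvd_prod_of_mem p hi)) _
  refine Nat.prod_dvd_of_forall_prime_dvd hp hinj fun i hi => ?_
  set e := finrank F F⟮z⟯ * ∏ j ∈ t.erase i, p j
  have hci : c i ≠ 0 := (Finset.mem_filter.1 hi).2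
  -- `c i • u i = z - ∑_{j ≠ i} c j • u j` has degree dividing `e`, and `p i` can divide `e`
  -- only through `finrank F F⟮z⟯`
  have hui : u i ∈ fixedByFrobeniusPow F K e := by
    have hsplit : c i • u i = z - ∑ j ∈ t.erase i, c j • u j := by
      rw [hz, ← Finset.add_sum_erase t _ hi, add_sub_cancel_right]
    have : c i • u i ∈ fixedByFrobeniusPow F K e := by
      rw [hsplit]
      refine sub_mem (mem_fixedByFrobeniusPow_iff.2 (dvd_mul_right _ _))
        (Subalgebra.sum_mem _ fun j hj => Subalgebra.smul_mem _ (hmem _ j ?_) _)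
      exact (Finset.dvd_prod_of_mem p hj).mul_left _
    simpa [smul_smul, inv_mul_cancel₀ hci] using Subalgebra.smul_mem _ this (c i)⁻¹
  rw [mem_fixedByFrobeniusPow_iff, hu] at hui
  refine ((hp i).dvd_mul.1 hui).resolve_right fun h => ?_
  exact Finset.notMem_erase i t ((Nat.prime_dvd_prod_iff_mem hp hinj).1 h)

omit [Fintype F] in
theorem exists_finrank_adjoin_simple_eq [Finite F] {e : ℕ} (he : e ∣ finrank F K) :
    ∃ z : K, finrank F F⟮z⟯ = e := by
  have : Fact (ringChar F).Prime := ⟨CharP.char_is_prime F _⟩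
  have : NeZero e := ⟨by rintro rfl; exact Module.finrank_pos.ne' (zero_dvd_iff.1 he)⟩
  obtain ⟨f⟩ := nonempty_algHom_of_finrank_dvd (K := Extension F (ringChar F) e) (L := K)
    (by rwa [finrank_extension])
  obtain ⟨α, hα⟩ := Field.exists_primitive_element F (Extension F (ringChar F) e)
  refine ⟨f α, ?_⟩
  rw [adjoin.finrank (Algebra.IsIntegral.isIntegral _), minpoly.algHom_eq f f.injective,
    ← adjoin.finrank (Algebra.IsIntegral.isIntegral _), hα, finrank_top', finrank_extension]

theorem adjoin_smul_add_smul_ne_adjoin_pair {ι : Type*} [Fintype ι]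
    {p : ι → ℕ} (hp : ∀ i, (p i).Prime) (hinj : Function.Injective p) {u : ι → K}
    (hu : ∀ i, finrank F F⟮u i⟯ = p i) (c : ι → F × F) {α β : F}
    (h : ∃ i, c i ≠ 0 ∧ α * (c i).1 + β * (c i).2 = 0) :
    F⟮α • ∑ i, (c i).1 • u i + β • ∑ i, (c i).2 • u i⟯ ≠
      F⟮∑ i, (c i).1 • u i, ∑ i, (c i).2 • u i⟯ := by
  classical
  obtain ⟨i, hci, hi⟩ := h
  have hdvd_of_ne_zero (a : ι → F) (ha : a i ≠ 0) : p i ∣ finrank F F⟮∑ j, a j • u j⟯ := by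
    rw [finrank_adjoin_sum_smul hp hinj hu, Nat.prime_dvd_prod_iff_mem hp hinj]
    simpa using ha
  have hdvd : p i ∣ finrank F F⟮∑ j, (c j).1 • u j, ∑ j, (c j).2 • u j⟯ := by
    by_cases h1 : (c i).1 = 0
    · refine (hdvd_of_ne_zero (fun j => (c j).2) fun h2 => hci (Prod.ext h1 h2)).trans
        (finrank_dvd_of_le_right (adjoin_simple_le_iff.2 (subset_adjoin _ _ (by simp))))
    · exact (hdvd_of_ne_zero (fun j => (c j).1) h1).trans
        (finrank_dvd_of_le_right (adjoin_simple_le_iff.2 (subset_adjoin _ _ (by simp))))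
  intro heq
  have hlin : α • ∑ j, (c j).1 • u j + β • ∑ j, (c j).2 • u j =
      ∑ j, (α * (c j).1 + β * (c j).2) • u j := by
    simp only [Finset.smul_sum, smul_smul, add_smul, Finset.sum_add_distrib]
  rw [← heq, hlin, finrank_adjoin_sum_smul hp hinj hu, Nat.prime_dvd_prod_iff_mem hp hinj] at hdvd
  simp [hi] at hdvd

end FiniteField

/-- Each `(α, β)` annihilates one of these vectors: `(0, 1)` if `β = 0`, `(1, 0)` if `α = 0`
and `(1, -α / β)` otherwise. -/
def pencilBlockingCoeffs (F : Type*) [Field F] (k : ℕ) : Bool ⊕ (Fˣ ⊕ Fin k) → F × F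
  | .inl true => (1, 0)
  | .inl false => (0, 1)
  | .inr (.inl γ) => (1, -γ)
  | .inr (.inr _) => (1, 1)

theorem exists_pencilBlockingCoeffs_eq_zero {F : Type*} [Field F] (k : ℕ) (α β : F) :
    ∃ i, pencilBlockingCoeffs F k i ≠ 0 ∧
      α * (pencilBlockingCoeffs F k i).1 + β * (pencilBlockingCoeffs F k i).2 = 0 := by
  by_cases hβ : β = 0
  · exact ⟨.inl false, by simp [pencilBlockingCoeffs, hβ]⟩
  by_cases hα : α = 0
  · exact ⟨.inl true, by simp [pencilBlockingCoeffs, hα]⟩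
  refine ⟨.inr (.inl (Units.mk0 (α / β) (div_ne_zero hα hβ))), by simp [pencilBlockingCoeffs], ?_⟩
  simp only [pencilBlockingCoeffs, Units.val_mk0]
  field_simp
  ring

theorem card_inter_filter_pencilBlockingCoeffs (F : Type*) [Field F] [Fintype F] [DecidableEq F]
    (k : ℕ) :
    (({i | (pencilBlockingCoeffs F k i).1 ≠ 0} : Finset _) ∩
      ({i | (pencilBlockingCoeffs F k i).2 ≠ 0} : Finset _)).card = Fintype.card F - 1 + k := by
  rw [← Finset.filter_and]
  have : ({i | (pencilBlockingCoeffs F k i).1 ≠ 0 ∧ (pencilBlockingCoeffs F k i).2 ≠ 0} :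
      Finset _) = Finset.univ.map .inr := by
    ext i
    simp only [Finset.mem_filter, Finset.mem_univ, true_and, Finset.mem_map]
    rcases i with (_ | _) | (_ | _) <;> simp [pencilBlockingCoeffs]
  rw [this, Finset.card_map, Finset.card_univ, Fintype.card_sum, Fintype.card_units,
    Fintype.card_fin]

theorem exists_injective_nat_prime (ι : Type*) [Finite ι] :
    ∃ p : ι → ℕ, (∀ i, (p i).Prime) ∧ Function.Injective p := by
  obtain ⟨n, ⟨e⟩⟩ := Finite.exists_equiv_fin ι
  exact ⟨fun i => Nat.nth Nat.Prime (e i), fun i => Nat.prime_nth_prime _,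
    (Nat.nth_injective Nat.infinite_setOfPred_prime).comp (Fin.val_injective.comp e.injective)⟩

open FiniteField

theorem stmt8_general (q : ℕ) (F : Type u) [Field F] [Fintype F]
    (hF : Fintype.card F = q) (A : ℕ) (hA : q - 1 ≤ A) :
    ∃ (K : Type u) (_ : Field K) (_ : Algebra F K), FiniteDimensional F K ∧
      ∃ (x y : K) (a b : ℕ), 0 < a ∧ 0 < b ∧
        Module.finrank F (IntermediateField.adjoin F {x}) = a ∧
        Module.finrank F (IntermediateField.adjoin F {y}) = b ∧
        ((Nat.gcd a b).primeFactors.filter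
          fun p => ¬ p ∣ (a / Nat.gcd a b) * (b / Nat.gcd a b)).card = A ∧
        ∀ α β : F,
          IntermediateField.adjoin F {α • x + β • y} ≠
            IntermediateField.adjoin F {x, y} := by
  classical
  set c := pencilBlockingCoeffs F (A - (q - 1))
  obtain ⟨p, hp, hinj⟩ := exists_injective_nat_prime (Bool ⊕ (Fˣ ⊕ Fin (A - (q - 1))))
  obtain ⟨K, _, _, _, hK⟩ := exists_finrank_eq F (n := ∏ i, p i)
    (Finset.prod_ne_zero_iff.2 fun i _ => (hp i).ne_zero)
  choose u hu using fun i => exists_finrank_adjoin_simple_eq (F := F) (K := K)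
    (hK ▸ Finset.dvd_prod_of_mem p (Finset.mem_univ i))
  refine ⟨K, _, _, inferInstance, ∑ i, (c i).1 • u i, ∑ i, (c i).2 • u i, _, _, finrank_pos,
    finrank_pos, rfl, rfl, ?_, fun α β => adjoin_smul_add_smul_ne_adjoin_pair hp hinj hu c
      (exists_pencilBlockingCoeffs_eq_zero _ α β)⟩
  rw [finrank_adjoin_sum_smul hp hinj hu, finrank_adjoin_sum_smul hp hinj hu,
    Nat.card_primeFactors_gcd_filter_not_dvd hp hinj, card_inter_filter_pencilBlockingCoeffs, hF]
  omega

/-- **Theorem (unomas).** Given a prime power `q`, a field `F` with `q` elements and an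
integer `A ≥ q - 1`, there exist `a, b ≥ 1` and `x, y` in some finite extension `K` of
`F` such that `x` has degree `a` over `F`, `y` has degree `b` over `F`, `d = gcd(a, b)`
has exactly `A` distinct prime factors not dividing `(a/d)·(b/d)`, and no `F`-linear
combination of `x, y` generates `F[x, y]` over `F`. -/
theorem stmt8 (q : ℕ) (hq : IsPrimePow q) (F : Type u) [Field F] [Fintype F]
    (hF : Fintype.card F = q) (A : ℕ) (hA : q - 1 ≤ A) :
    ∃ (K : Type u) (_ : Field K) (_ : Algebra F K), FiniteDimensional F K ∧
      ∃ (x y : K) (a b : ℕ), 0 < a ∧ 0 < b ∧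
        Module.finrank F (IntermediateField.adjoin F {x}) = a ∧
        Module.finrank F (IntermediateField.adjoin F {y}) = b ∧
        ((Nat.gcd a b).primeFactors.filter
          fun p => ¬ p ∣ (a / Nat.gcd a b) * (b / Nat.gcd a b)).card = A ∧
        ∀ α β : F,
          IntermediateField.adjoin F {α • x + β • y} ≠
            IntermediateField.adjoin F {x, y} :=
  stmt8_general q F hF A hA
end

section
/- Let F be a perfect field and let A be a finite-dimensional commutative associative unital F-algebra. If A has a finite-dimensional faithful uniserial module of composition length ℓ, then A = F[u] for some u ∈ A whose minimal polynomial over F is p^ℓ for some monic irreducible polynomial p ∈ F[X]. -/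
/-!
The faithful uniserial module `V` is cyclic, hence isomorphic to `A`, so the ideals of `A` are
totally ordered: `A` is local with principal maximal ideal `m = (π)`, and the composition series
of `V` becomes `0 = m^ℓ ⊊ m^(ℓ-1) ⊊ ⋯ ⊊ m^0 = A`. Since `F` is perfect, the residue field `A/m`
is `F(ᾱ)` with separable minimal polynomial `p`; as `m` is nilpotent, `A` is Henselian and `ᾱ`
lifts to a root `a` of `p`. For `u = a + π` the element `p(u)` is `π` times a unit, so it
generates `m`; hence `p(u)^ℓ = 0 ≠ p(u)^(ℓ-1)`, giving `minpoly u = p^ℓ`, and `F[u]`, which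
surjects onto `A/m` and contains a generator of the nilpotent ideal `m`, is all of `A`.
-/

open Polynomial IsLocalRing

theorem Submodule.FG.exists_eq_span_singleton_of_le_total {R M : Type*} [Semiring R]
    [AddCommMonoid M] [Module R M] (htot : ∀ N₁ N₂ : Submodule R M, N₁ ≤ N₂ ∨ N₂ ≤ N₁)
    {N : Submodule R M} (hN : N.FG) : ∃ x, N = span R {x} := by
  classical
  obtain ⟨s, rfl⟩ := hN
  induction s using Finset.induction_on with
  | empty => exact ⟨0, by simp⟩
  | insert a s _ ih =>
    obtain ⟨y, hy⟩ := ih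
    rw [Finset.coe_insert, span_insert, hy]
    rcases htot (span R {a}) (span R {y}) with h | h
    · exact ⟨y, sup_eq_right.mpr h⟩
    · exact ⟨a, sup_eq_left.mpr h⟩

theorem LinearMap.toSpanSingleton_bijective_of_faithfulSMul {A V : Type*} [CommRing A]
    [AddCommGroup V] [Module A V] [FaithfulSMul A V] {v : V} (hv : Submodule.span A {v} = ⊤) :
    Function.Bijective (LinearMap.toSpanSingleton A V v) := by
  refine ⟨?_, ?_⟩
  · rw [← LinearMap.ker_eq_bot, ← (Module.annihilator_eq_bot (R := A) (M := V)).mpr inferInstance,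
      ← Submodule.annihilator_top, ← hv]
    ext a
    simp
  · rw [← LinearMap.range_eq_top, ← LinearMap.span_singleton_eq_range, hv]

theorem exists_linearEquiv_of_faithfulSMul_of_le_total {A V : Type*} [CommRing A]
    [AddCommGroup V] [Module A V] [FaithfulSMul A V] [Module.Finite A V]
    (htot : ∀ W₁ W₂ : Submodule A V, W₁ ≤ W₂ ∨ W₂ ≤ W₁) : Nonempty (A ≃ₗ[A] V) := by
  obtain ⟨v, hv⟩ := Module.Finite.fg_top.exists_eq_span_singleton_of_le_total htot
  exact ⟨.ofBijective _ (LinearMap.toSpanSingleton_bijective_of_faithfulSMul hv.symm)⟩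

theorem IsAdicComplete.of_pow_eq_bot {R M : Type*} [CommRing R] [AddCommGroup M] [Module R M]
    {I : Ideal R} {n : ℕ} (hn : I ^ n = ⊥) : IsAdicComplete I M where
  haus' x hx := by simpa [hn, SModEq.zero] using hx n
  prec' f hf := ⟨f n, fun k => by
    rcases le_total k n with hk | hk
    · exact hf hk
    · exact (by simpa [hn, SModEq.bot] using hf hk : f n = f k) ▸ SModEq.refl _⟩

theorem HenselianLocalRing.of_maximalIdeal_pow_eq_bot {A : Type*} [CommRing A] [IsLocalRing A]
    {n : ℕ} (hn : maximalIdeal A ^ n = ⊥) : HenselianLocalRing A where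
  is_henselian f hf a₀ h₁ h₂ :=
    haveI := IsAdicComplete.of_pow_eq_bot (M := A) hn
    HenselianRing.is_henselian f hf a₀ h₁ (h₂.map _)

theorem HenselianLocalRing.exists_lift_primitive_element (F A : Type*) [Field F] [PerfectField F]
    [CommRing A] [HenselianLocalRing A] [Algebra F A] [Module.Finite F A] :
    ∃ a : A, ∃ p : F[X], p.Monic ∧ Irreducible p ∧ aeval a p = 0 ∧
      IsUnit (aeval a (derivative p)) ∧ Algebra.adjoin F {residue A a} = ⊤ := by
  obtain ⟨α, hα⟩ := Field.exists_primitive_element F (ResidueField A)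
  have hint : IsIntegral F α := .of_finite F α
  have hsep : (minpoly F α).Separable := Algebra.IsSeparable.isSeparable F α
  have hensel := ((HenselianLocalRing.TFAE A).out 0 1).mp ‹_›
  obtain ⟨a, hroot, rfl⟩ :=
    hensel ((minpoly F α).map (algebraMap F A)) ((minpoly.monic hint).map _) α
    (by rw [aeval_map_algebraMap, minpoly.aeval])
    (by rw [derivative_map, aeval_map_algebraMap]
        exact hsep.aeval_derivative_ne_zero (minpoly.aeval F α))
  refine ⟨a, minpoly F (residue A a), minpoly.monic hint, minpoly.irreducible hint, ?_, ?_, ?_⟩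
  · rwa [IsRoot, eval_map_algebraMap] at hroot
  · rw [← residue_ne_zero_iff_isUnit, ← ResidueField.algebraMap_eq, ← aeval_algebraMap_apply,
      ResidueField.algebraMap_eq]
    exact hsep.aeval_derivative_ne_zero (minpoly.aeval F _)
  · rw [← IntermediateField.adjoin_simple_toSubalgebra_of_isAlgebraic hint.isAlgebraic, hα,
      IntermediateField.top_toSubalgebra]

theorem minpoly_eq_pow_of_aeval_pow {F A : Type*} [Field F] [Ring A] [Algebra F A]
    {u : A} (hu : IsIntegral F u) {p : F[X]} (hp : p.Monic) (hirr : Irreducible p) {ℓ : ℕ}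
    (hℓ : aeval u p ^ ℓ = 0) (hℓ' : aeval u p ^ (ℓ - 1) ≠ 0) : minpoly F u = p ^ ℓ := by
  obtain ⟨i, hi, hassoc⟩ := (dvd_prime_pow hirr.prime ℓ).mp
    (minpoly.dvd F u (by rw [map_pow, hℓ]))
  have heq := eq_of_monic_of_associated (minpoly.monic hu) (hp.pow i) hassoc
  have hi' : aeval u p ^ i = 0 := by rw [← map_pow, ← heq, minpoly.aeval]
  obtain rfl : i = ℓ := by
    by_contra hne
    exact hℓ' (pow_eq_zero_of_le (by omega) hi')
  exact heq

theorem Subalgebra.eq_top_of_forall_exists_add_mul {R A : Type*} [CommSemiring R] [CommRing A]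
    [Algebra R A] {B : Subalgebra R A} {ρ : A} (hρB : ρ ∈ B) (hρ : IsNilpotent ρ)
    (h : ∀ x, ∃ b ∈ B, ∃ y, x = b + ρ * y) : B = ⊤ := by
  have key : ∀ n x, ∃ b ∈ B, ∃ y, x = b + ρ ^ n * y := by
    intro n
    induction n with
    | zero => exact fun x => ⟨0, B.zero_mem, x, by simp⟩
    | succ n ih =>
      intro x
      obtain ⟨b, hb, y, rfl⟩ := ih x
      obtain ⟨b', hb', y', rfl⟩ := h y
      exact ⟨b + ρ ^ n * b', B.add_mem hb (B.mul_mem (B.pow_mem hρB n) hb'), y', by ring⟩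
  obtain ⟨n, hn⟩ := hρ
  refine eq_top_iff.mpr fun x _ => ?_
  obtain ⟨b, hb, y, rfl⟩ := key n x
  simpa [hn] using hb

namespace IsLocalRing

variable {A : Type*} [CommRing A] [IsLocalRing A]

theorem eq_maximalIdeal_mul_of_covBy_span_singleton {W : Ideal A} {x : A}
    (h : W ⋖ Ideal.span {x}) : W = maximalIdeal A * Ideal.span {x} := by
  have hle : W ≤ maximalIdeal A * Ideal.span {x} := by
    intro w hw
    obtain ⟨a, rfl⟩ := Ideal.mem_span_singleton'.mp (h.le hw)
    have ha : a ∈ maximalIdeal A := fun hu => h.lt.not_ge <|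
      (Ideal.span_singleton_le_iff_mem _).mpr ((Submodule.smul_mem_iff_of_isUnit W hu).mp hw)
    exact Ideal.mul_mem_mul ha (Ideal.mem_span_singleton_self x)
  -- Nakayama: `x ≠ 0` since `W < (x)`, hence `m (x) < (x)`.
  have hlt : maximalIdeal A * Ideal.span {x} < Ideal.span {x} := by
    refine Ideal.mul_le_right.lt_of_ne fun heq => h.lt.ne_bot ?_
    refine Submodule.eq_bot_of_le_smul_of_le_jacobson_bot _ _ (Submodule.fg_span_singleton x)
      heq.ge ?_
    rw [jacobson_eq_maximalIdeal ⊥ bot_ne_top]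
  exact hle.eq_or_lt.resolve_right fun h' => h.2 h' hlt

theorem eq_maximalIdeal_pow_of_covBy {π : A} (hπ : maximalIdeal A = Ideal.span {π}) {ℓ : ℕ}
    {d : Fin (ℓ + 1) → Ideal A} (htop : d (Fin.last ℓ) = ⊤)
    (hcov : ∀ i : Fin ℓ, d i.castSucc ⋖ d i.succ) (i : Fin (ℓ + 1)) :
    d i = maximalIdeal A ^ (ℓ - i) := by
  induction i using Fin.reverseInduction with
  | last => simp [htop]
  | cast i ih =>
    have h := hcov i
    rw [ih, hπ, Ideal.span_singleton_pow] at h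
    rw [eq_maximalIdeal_mul_of_covBy_span_singleton h, ← Ideal.span_singleton_pow, ← hπ,
      ← pow_succ']
    congr 1
    simp only [Fin.val_succ, Fin.val_castSucc]
    omega

theorem associated_eval_add_of_isRoot {f : A[X]} {a π : A} (hroot : f.IsRoot a)
    (hder : IsUnit (f.derivative.eval a)) (hπ : π ∈ maximalIdeal A) : Associated π (f.eval (a + π)) := by
  obtain ⟨k, hk⟩ := f.binomExpansion a π
  have hunit : IsUnit (f.derivative.eval a + k * π) := by
    by_contra h
    refine (mem_maximalIdeal _).mp ?_ hder
    simpa using (maximalIdeal A).sub_mem ((mem_maximalIdeal _).mpr h) (Ideal.mul_mem_left _ k hπ)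
  refine ⟨hunit.unit, ?_⟩
  rw [hk, hroot.eq_zero, IsUnit.unit_spec]
  ring

theorem exists_sub_mem_maximalIdeal_of_adjoin_residue_eq_top {F : Type*} [CommRing F]
    [Algebra F A] {u : A} (hu : Algebra.adjoin F {residue A u} = ⊤) (x : A) :
    ∃ b ∈ Algebra.adjoin F {u}, x - b ∈ maximalIdeal A := by
  let φ := IsScalarTower.toAlgHom F A (ResidueField A)
  have hmap : (Algebra.adjoin F {u}).map φ = ⊤ := by
    rw [AlgHom.map_adjoin_singleton]
    exact hu
  obtain ⟨b, hb, hbx⟩ := hmap.ge (Algebra.mem_top (x := φ x))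
  refine ⟨b, hb, ?_⟩
  rw [← residue_eq_zero_iff, map_sub, sub_eq_zero]
  exact hbx.symm

end IsLocalRing

theorem IsLocalRing.exists_adjoin_eq_top_minpoly_eq_pow (F A : Type*) [Field F] [PerfectField F]
    [CommRing A] [IsLocalRing A] [Algebra F A] [Module.Finite F A] {π : A}
    (hπ : maximalIdeal A = Ideal.span {π}) {ℓ : ℕ} (hℓ : maximalIdeal A ^ ℓ = ⊥)
    (hℓ' : maximalIdeal A ^ (ℓ - 1) ≠ ⊥) :
    ∃ u : A, Algebra.adjoin F {u} = ⊤ ∧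
      ∃ p : F[X], p.Monic ∧ Irreducible p ∧ minpoly F u = p ^ ℓ := by
  have := HenselianLocalRing.of_maximalIdeal_pow_eq_bot hℓ
  obtain ⟨a, p, hmonic, hirr, hroot, hder, hgen⟩ :=
    HenselianLocalRing.exists_lift_primitive_element F A
  have hπm : π ∈ maximalIdeal A := hπ ▸ Ideal.mem_span_singleton_self π
  -- `a` is a simple root of `p` and `π` a uniformizer, so `p (a + π)` is again a uniformizer.
  have hρ : maximalIdeal A = Ideal.span {aeval (a + π) p} := by
    obtain ⟨w, hw⟩ : Associated π (aeval (a + π) p) := by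
      rw [← eval_map_algebraMap]
      refine associated_eval_add_of_isRoot ?_ ?_ hπm
      · rwa [IsRoot, eval_map_algebraMap]
      · rwa [derivative_map, eval_map_algebraMap]
    rw [hπ, ← hw, Ideal.span_singleton_mul_right_unit w.isUnit]
  set ρ := aeval (a + π) p
  have hpow (k : ℕ) : maximalIdeal A ^ k = Ideal.span {ρ ^ k} := by
    rw [hρ, Ideal.span_singleton_pow]
  have hρℓ : ρ ^ ℓ = 0 := by rwa [hpow, Ideal.span_singleton_eq_bot] at hℓ
  have hρℓ' : ρ ^ (ℓ - 1) ≠ 0 := by rwa [hpow, Ne, Ideal.span_singleton_eq_bot] at hℓ'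
  refine ⟨a + π, ?_, p, hmonic, hirr,
    minpoly_eq_pow_of_aeval_pow (.of_finite F _) hmonic hirr hρℓ hρℓ'⟩
  refine Subalgebra.eq_top_of_forall_exists_add_mul (aeval_mem_adjoin_singleton F _) ⟨ℓ, hρℓ⟩
    fun x => ?_
  have hres : residue A (a + π) = residue A a := by
    rw [map_add, (residue_eq_zero_iff π).mpr hπm, add_zero]
  obtain ⟨b, hb, hxb⟩ := exists_sub_mem_maximalIdeal_of_adjoin_residue_eq_top (hres ▸ hgen) x
  obtain ⟨y, hy⟩ := Ideal.mem_span_singleton.mp (hρ ▸ hxb)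
  exact ⟨b, hb, y, by rw [← hy]; ring⟩

/-- **Theorem (abel), (c) ⟹ (a).** Let `F` be a perfect field and `A` a
finite-dimensional commutative associative unital `F`-algebra.  If `A` has a
finite-dimensional faithful uniserial module of composition length `ℓ` (uniserial:
nonzero with submodules totally ordered; length-`ℓ` composition series encoded as a
maximal chain `⊥ = c 0 ⋖ c 1 ⋖ ⋯ ⋖ c ℓ = ⊤`), then `A = F[u]` for some `u ∈ A` whose
minimal polynomial over `F` is `p^ℓ` with `p ∈ F[X]` monic irreducible. -/
theorem stmt9 (F : Type*) [Field F] [PerfectField F]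
    (A : Type*) [CommRing A] [Algebra F A] [FiniteDimensional F A]
    (V : Type*) [AddCommGroup V] [Module A V] [Module F V] [IsScalarTower F A V]
    [FiniteDimensional F V] [FaithfulSMul A V]
    (huni : Nontrivial V ∧ ∀ W₁ W₂ : Submodule A V, W₁ ≤ W₂ ∨ W₂ ≤ W₁)
    (ℓ : ℕ)
    (hlen : ∃ c : Fin (ℓ + 1) → Submodule A V, c 0 = ⊥ ∧ c (Fin.last ℓ) = ⊤ ∧
      ∀ i : Fin ℓ, c i.castSucc ⋖ c i.succ) :
    ∃ u : A, Algebra.adjoin F {u} = ⊤ ∧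
      ∃ p : Polynomial F, p.Monic ∧ Irreducible p ∧ minpoly F u = p ^ ℓ := by
  obtain ⟨hV, htot⟩ := huni
  obtain ⟨c, hc0, hcl, hcov⟩ := hlen
  have : Nontrivial A := Module.nontrivial A V
  have : Module.Finite A V := .of_restrictScalars_finite F A V
  have : IsNoetherianRing A := isNoetherian_of_tower F inferInstance
  obtain ⟨e⟩ := exists_linearEquiv_of_faithfulSMul_of_le_total htot
  let o := Submodule.orderIsoMapComap e
  have htotA (I J : Ideal A) : I ≤ J ∨ J ≤ I := (htot (o I) (o J)).imp o.le_iff_le.mp o.le_iff_le.mp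
  have : PreValuationRing A := PreValuationRing.iff_ideal_total.mpr ⟨htotA⟩
  obtain ⟨π, hπ⟩ := Submodule.FG.exists_eq_span_singleton_of_le_total htotA
    (IsNoetherian.noetherian (maximalIdeal A))
  have hd := eq_maximalIdeal_pow_of_covBy hπ (d := fun i => o.symm (c i)) (by simp [hcl])
    fun i => (apply_covBy_apply_iff o.symm).mpr (hcov i)
  obtain _ | ℓ := ℓ
  · exact absurd (hc0.symm.trans hcl) bot_ne_top
  refine exists_adjoin_eq_top_minpoly_eq_pow F A hπ ?_ ?_
  · simpa [hc0] using (hd 0).symm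
  · have hc1 : c 1 ≠ ⊥ := by simpa [hc0] using (hcov 0).lt.ne'
    have h1 := hd 1
    simp only [Fin.val_one] at h1 ⊢
    rw [← h1, Ne, map_eq_bot_iff]
    exact hc1
end

section
/- Let F be a field, let A be a commutative associative unital F-algebra, and let V be a finite-dimensional uniserial A-module. Then for every a ∈ A the minimal polynomial of the action of a on V is a power of a monic irreducible polynomial p_a ∈ F[X], and the minimal polynomial of the action of a on every composition factor of V is equal to p_a. -/
set_option maxHeartbeats 1000000


/-- The `F`-linear endomorphism of an `A`-module `V` given by the action of `a ∈ A`. -/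
noncomputable def actEnd (F : Type*) {A : Type*} (V : Type*) [CommSemiring F] [Ring A]
    [Algebra F A] [AddCommGroup V] [Module F V] [Module A V] [IsScalarTower F A V]
    (a : A) : Module.End F V :=
  DistribMulAction.toLinearMap F V a

open Polynomial

section Aux

variable {F : Type*} [Field F]

/-- Semiconjugation passes to `aeval` of polynomials. -/
private lemma aeval_semiconj {V W : Type*} [AddCommGroup V] [Module F V] [AddCommGroup W]
    [Module F W] (f : Module.End F V) (g : Module.End F W) (π : V →ₗ[F] W)
    (h : ∀ x, π (f x) = g (π x)) (q : F[X]) (x : V) :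
    π ((aeval f q) x) = (aeval g q) (π x) := by
  induction q using Polynomial.induction_on' with
  | add p q hp hq => simp [map_add, hp, hq]
  | monomial n c =>
      have hn : ∀ x, π ((f ^ n) x) = (g ^ n) (π x) := by
        induction n with
        | zero => simp
        | succ n ih =>
            intro x
            rw [pow_succ, pow_succ]
            simp only [Module.End.mul_apply]
            rw [ih (f x), h x]
      simp only [aeval_monomial, Module.End.mul_apply, Module.algebraMap_end_apply, map_smul]
      rw [hn]

variable {A : Type*} [CommRing A] [Algebra F A]

/-- The kernel of `aeval (actEnd F V a) q` as a submodule over `A`. -/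
private def kerA (V : Type*) [AddCommGroup V] [Module F V] [Module A V]
    [IsScalarTower F A V] (a : A) (q : F[X]) : Submodule A V where
  carrier := {x | (aeval (actEnd F V a) q) x = 0}
  add_mem' := by
    intro x y hx hy
    simp only [Set.mem_setOf_eq] at *
    rw [map_add, hx, hy, add_zero]
  zero_mem' := by simp
  smul_mem' := by
    intro b x hx
    simp only [Set.mem_setOf_eq] at *
    have h : ∀ y : V, (actEnd F V b) ((actEnd F V a) y) = (actEnd F V a) ((actEnd F V b) y) := by
      intro y
      show b • a • y = a • b • y
      rw [smul_smul, smul_smul, mul_comm]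
    have := aeval_semiconj (actEnd F V a) (actEnd F V a) (actEnd F V b) h q x
    show (aeval (actEnd F V a) q) (b • x) = 0
    have hbx : (actEnd F V b) x = b • x := rfl
    rw [← hbx, ← this]
    show b • (aeval (actEnd F V a) q) x = 0
    rw [hx, smul_zero]

private lemma mem_kerA {V : Type*} [AddCommGroup V] [Module F V] [Module A V]
    [IsScalarTower F A V] {a : A} {q : F[X]} {x : V} :
    x ∈ kerA V a q ↔ (aeval (actEnd F V a) q) x = 0 := Iff.rfl

/-- For a monic non-unit divisor `g` of the minimal polynomial of `f`, the kernel of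
`aeval f g` is nonzero. -/
private lemma exists_ne_zero_ker {V : Type*} [AddCommGroup V] [Module F V]
    (f : Module.End F V) (hint : IsIntegral F f) {g : F[X]} (hg : g.Monic) (hg1 : g ≠ 1)
    (hdvd : g ∣ minpoly F f) : ∃ x : V, x ≠ 0 ∧ (aeval f g) x = 0 := by
  obtain ⟨s, hs⟩ := hdvd
  have hm0 : minpoly F f ≠ 0 := minpoly.ne_zero hint
  have hg0 : g ≠ 0 := hg.ne_zero
  have hs0 : s ≠ 0 := by rintro rfl; exact hm0 (by rw [hs, mul_zero])
  have hsf : aeval f s ≠ 0 := by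
    intro h
    have hdvd' := minpoly.dvd F f h
    have h1 := Polynomial.natDegree_le_of_dvd hdvd' hs0
    have h2 : (minpoly F f).natDegree = g.natDegree + s.natDegree := by
      rw [hs, Polynomial.natDegree_mul hg0 hs0]
    have h3 : 0 < g.natDegree := by
      rcases Nat.eq_zero_or_pos g.natDegree with h4 | h4
      · exact absurd (hg.natDegree_eq_zero.mp h4) hg1
      · exact h4
    omega
  have : ∃ x : V, (aeval f s) x ≠ 0 := by
    by_contra h
    push_neg at h
    exact hsf (LinearMap.ext fun x => h x)
  obtain ⟨x, hx⟩ := this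
  refine ⟨(aeval f s) x, hx, ?_⟩
  have : (aeval f g) ((aeval f s) x) = (aeval f (g * s)) x := by
    rw [map_mul]; rfl
  rw [this, ← hs, minpoly.aeval]
  rfl

private lemma eq_zero_of_coprime {V : Type*} [AddCommGroup V] [Module F V]
    (f : Module.End F V) {u v : F[X]} (h : IsCoprime u v) {x : V}
    (hu : (aeval f u) x = 0) (hv : (aeval f v) x = 0) : x = 0 := by
  obtain ⟨c, d, hcd⟩ := h
  have h1 : (aeval f (c * u + d * v)) x = x := by rw [hcd]; simp
  have h2 : (aeval f (c * u)) x = 0 := by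
    rw [map_mul]
    show (aeval f c) ((aeval f u) x) = 0
    rw [hu, map_zero]
  have h3 : (aeval f (d * v)) x = 0 := by
    rw [map_mul]
    show (aeval f d) ((aeval f v) x) = 0
    rw [hv, map_zero]
  rw [map_add] at h1
  simp only [LinearMap.add_apply] at h1
  rw [h2, h3, add_zero] at h1
  exact h1.symm

end Aux

/-- Let `F` be a field, `A` a commutative associative unital `F`-algebra, and `V` a
finite-dimensional uniserial `A`-module.  Then for every `a ∈ A` the minimal polynomial
of the action of `a` on `V` is a power of a monic irreducible polynomial `pₐ ∈ F[X]`,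
and the minimal polynomial of the action of `a` on every composition factor `W₂/W₁`
of `V` equals `pₐ`. -/
theorem stmt11 (F : Type*) [Field F] (A : Type*) [CommRing A] [Algebra F A]
    (V : Type*) [AddCommGroup V] [Module F V] [Module A V] [IsScalarTower F A V]
    [FiniteDimensional F V]
    (huni : Nontrivial V ∧ ∀ W₁ W₂ : Submodule A V, W₁ ≤ W₂ ∨ W₂ ≤ W₁)
    (a : A) :
    ∃ p : Polynomial F, p.Monic ∧ Irreducible p ∧
      (∃ k : ℕ, minpoly F (actEnd F V a) = p ^ k) ∧
      ∀ (W₁ W₂ : Submodule A V), W₁ ≤ W₂ →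
        IsSimpleModule A (↥W₂ ⧸ Submodule.comap W₂.subtype W₁) →
        minpoly F (actEnd F (↥W₂ ⧸ Submodule.comap W₂.subtype W₁) a) = p := by
  obtain ⟨hV, horder⟩ := huni
  set f : Module.End F V := actEnd F V a with hf
  have hint : IsIntegral F f := Algebra.IsIntegral.isIntegral f
  set m : Polynomial F := minpoly F f with hm
  have hmmonic : m.Monic := minpoly.monic hint
  have hm0 : m ≠ 0 := hmmonic.ne_zero
  have hdegm : 0 < m.natDegree := minpoly.natDegree_pos hint
  have hm1 : m ≠ 1 := by
    intro h; rw [h] at hdegm; simp at hdegm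
  -- find a monic irreducible factor of m
  obtain ⟨p₀, hp₀irr, hp₀dvd⟩ :=
    WfDvdMonoid.exists_irreducible_factor (fun h => hm1 (hmmonic.eq_one_of_isUnit h)) hm0
  classical
  set p : Polynomial F := normalize p₀ with hp
  have hpmonic : p.Monic := Polynomial.monic_normalize hp₀irr.ne_zero
  have hpassoc : Associated p₀ p := associated_normalize p₀
  have hpirr : Irreducible p := hpassoc.irreducible hp₀irr
  have hpdvd : p ∣ m := dvd_trans hpassoc.symm.dvd hp₀dvd
  -- extract the maximal power of p
  obtain ⟨k, r, hrnd, hmk⟩ := WfDvdMonoid.max_power_factor hm0 hpirr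
  have hrmonic : r.Monic := (hpmonic.pow k).of_mul_monic_left (by rw [← hmk]; exact hmmonic)
  have hr1 : r = 1 := by
    by_contra hr1
    have hkpos : 0 < k := by
      rcases Nat.eq_zero_or_pos k with h | h
      · rw [h, pow_zero, one_mul] at hmk
        exact absurd (hmk ▸ hpdvd) hrnd
      · exact h
    have hpk1 : p ^ k ≠ 1 := by
      intro h
      exact hpirr.not_isUnit ((isUnit_pow_iff hkpos.ne').mp (h ▸ isUnit_one))
    obtain ⟨x, hx0, hxk⟩ :=
      exists_ne_zero_ker f hint (hpmonic.pow k) hpk1 ⟨r, hmk⟩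
    obtain ⟨y, hy0, hyr⟩ :=
      exists_ne_zero_ker f hint hrmonic hr1 ⟨p ^ k, by show m = r * p ^ k; rw [hmk, mul_comm]⟩
    have hcop : IsCoprime (p ^ k) r := (hpirr.coprime_iff_not_dvd.mpr hrnd).pow_left
    rcases horder (kerA V a (p ^ k)) (kerA V a r) with hle | hle
    · exact hx0 (eq_zero_of_coprime f hcop hxk (hle (mem_kerA.mpr hxk)))
    · exact hy0 (eq_zero_of_coprime f hcop (hle (mem_kerA.mpr hyr)) hyr)
  rw [hr1, mul_one] at hmk
  refine ⟨p, hpmonic, hpirr, ⟨k, hmk⟩, ?_⟩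
  -- composition factors
  intro W₁ W₂ hW12 hsimple
  set Q := ↥W₂ ⧸ Submodule.comap W₂.subtype W₁ with hQ
  set fQ : Module.End F Q := actEnd F Q a with hfQ
  set fW : Module.End F ↥W₂ := actEnd F ↥W₂ a with hfW
  let ι : ↥W₂ →ₗ[F] V := W₂.subtype.restrictScalars F
  let π : ↥W₂ →ₗ[F] Q := ((Submodule.comap W₂.subtype W₁).mkQ).restrictScalars F
  haveI hfdW : FiniteDimensional F ↥W₂ :=
    FiniteDimensional.of_injective ι (Submodule.injective_subtype W₂)
  have hπsurj : Function.Surjective π := fun y => by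
    obtain ⟨w, hw⟩ := Submodule.mkQ_surjective (Submodule.comap W₂.subtype W₁) y
    exact ⟨w, hw⟩
  haveI hfdQ : FiniteDimensional F Q := Module.Finite.of_surjective π hπsurj
  haveI hQnt : Nontrivial Q := IsSimpleModule.nontrivial A Q
  have hintQ : IsIntegral F fQ := Algebra.IsIntegral.isIntegral fQ
  have hι : ∀ w : ↥W₂, ι (fW w) = f (ι w) := fun w => rfl
  have hπ : ∀ w : ↥W₂, π (fW w) = fQ (π w) := by
    intro w
    show Submodule.Quotient.mk (a • w) = a • (Submodule.Quotient.mk w : Q)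
    rw [Submodule.Quotient.mk_smul]
  have hιinj : Function.Injective ι := fun x y hxy => Subtype.ext hxy
  have hWm : aeval fW m = 0 := by
    apply LinearMap.ext
    intro w
    rw [LinearMap.zero_apply]
    apply hιinj
    rw [map_zero, aeval_semiconj fW f ι hι m w]
    show (aeval f (minpoly F f)) (ι w) = 0
    rw [minpoly.aeval]
    rfl
  have hQm : aeval fQ m = 0 := by
    apply LinearMap.ext
    intro y
    obtain ⟨w, rfl⟩ := hπsurj y
    rw [← aeval_semiconj fW fQ π hπ m w, hWm]
    simp
  set mQ : Polynomial F := minpoly F fQ with hmQ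
  have hmQmonic : mQ.Monic := minpoly.monic hintQ
  have hmQdvd : mQ ∣ p ^ k := hmk ▸ minpoly.dvd F fQ hQm
  have hpprime : Prime p := (UniqueFactorizationMonoid.irreducible_iff_prime).mp hpirr
  obtain ⟨j, hjk, hassoc⟩ := (dvd_prime_pow hpprime k).mp hmQdvd
  have hmQeq : mQ = p ^ j :=
    Polynomial.eq_of_monic_of_associated hmQmonic (hpmonic.pow j) hassoc
  have hdegmQ : 0 < mQ.natDegree := minpoly.natDegree_pos hintQ
  have hjpos : 0 < j := by
    rcases Nat.eq_zero_or_pos j with h | h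
    · rw [h, pow_zero] at hmQeq
      rw [hmQeq] at hdegmQ
      simp at hdegmQ
    · exact h
  have hpdvdmQ : p ∣ mQ := hmQeq ▸ dvd_pow_self p hjpos.ne'
  obtain ⟨x, hx0, hxp⟩ := exists_ne_zero_ker fQ hintQ hpmonic hpirr.ne_one hpdvdmQ
  -- the kernel of p(fQ) is a nonzero A-submodule of the simple module Q, hence is ⊤
  have htop : kerA Q a p = ⊤ := by
    rcases eq_bot_or_eq_top (kerA Q a p) with h | h
    · exfalso
      apply hx0
      have := mem_kerA.mpr hxp
      rw [h] at this
      simpa using this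
    · exact h
  have hpQ : aeval fQ p = 0 := by
    apply LinearMap.ext
    intro y
    have : y ∈ kerA Q a p := htop ▸ Submodule.mem_top
    exact mem_kerA.mp this
  have hmQdvdp : mQ ∣ p := minpoly.dvd F fQ hpQ
  obtain ⟨c, hc⟩ := hmQdvdp
  rcases hpirr.isUnit_or_isUnit hc with h | h
  · exact absurd (hmQmonic.eq_one_of_isUnit h) (by
      intro h1
      rw [h1] at hdegmQ
      simp at hdegmQ)
  · have : Associated mQ p := ⟨h.unit, by rw [IsUnit.unit_spec]; exact hc.symm⟩
    exact Polynomial.eq_of_monic_of_associated hmQmonic hpmonic this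
end

section
/- Let F be a perfect field, let A be a commutative associative unital F-algebra, and let V be a finite-dimensional uniserial A-module of composition length ℓ. Then there exists x ∈ A such that V is a uniserial F[x]-module; moreover, the minimal polynomial of the action of x on V equals p^ℓ for some monic irreducible polynomial p ∈ F[X] with ℓ·deg(p) = dim_F V (so x acts on V by a cyclic endomorphism, represented by the companion matrix of p^ℓ in a suitable basis), and every element of A acts on V as a polynomial in the action of x. -/
/-!
The submodules of `V` form a chain, so `V` is cyclic and hence isomorphic to the image `B` of `A`
in `End_F V`; the ideals of the finite-dimensional algebra `B` then form a chain of length `ℓ`.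
So `B` is local with principal nilpotent maximal ideal `(t)`. Lift a primitive element of the
residue field, which is separable over the perfect field `F`, to a root `θ` of its minimal
polynomial `p` (Newton's method) and put `x = θ + t`. Then `p(x) = t · unit` generates the maximal
ideal, so `B = F[x] + p(x) B`, and since `p(x)` is nilpotent, `B = F[x]`. The ideals of `B` are
the powers of `(p(x))`, which ties `ℓ` to the nilpotency class of `p(x)`, i.e. to the exponent
in `minpoly x = p ^ ℓ`.
-/

open Polynomial IsLocalRing

theorem Submodule.exists_eq_span_singleton_of_isTotal {R M : Type*} [Ring R] [AddCommGroup M]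
    [Module R M] [IsNoetherian R M] (htot : ∀ N₁ N₂ : Submodule R M, N₁ ≤ N₂ ∨ N₂ ≤ N₁)
    (N : Submodule R M) : ∃ v, N = R ∙ v := by
  obtain ⟨_, ⟨v, hvN, rfl⟩, hmax⟩ := set_has_maximal_iff_noetherian.mpr ‹_›
    {P | ∃ v ∈ N, R ∙ v = P} ⟨_, 0, N.zero_mem, rfl⟩
  refine ⟨v, le_antisymm (fun w hw ↦ ?_) ((span_singleton_le_iff_mem v N).mpr hvN)⟩
  rcases htot (R ∙ w) (R ∙ v) with h | h
  · exact h (mem_span_singleton_self w)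
  · rw [h.lt_or_eq.resolve_left (hmax _ ⟨w, hw, rfl⟩)]
    exact mem_span_singleton_self w

theorem Nat.card_eq_of_covBy_chain {α : Type*} [PartialOrder α] [BoundedOrder α]
    (htot : ∀ a b : α, a ≤ b ∨ b ≤ a) {n : ℕ} (c : Fin (n + 1) → α) (h0 : c 0 = ⊥)
    (hlast : c (Fin.last n) = ⊤) (hcov : ∀ i : Fin n, c i.castSucc ⋖ c i.succ) :
    Nat.card α = n + 1 := by
  have hmono : StrictMono c := Fin.strictMono_iff_lt_succ.mpr fun i ↦ (hcov i).lt
  have hsurj : Function.Surjective c := by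
    intro a
    by_contra! hne
    have hlt : ∀ i, c i < a := by
      refine Fin.induction (h0 ▸ bot_le.lt_of_ne (h0 ▸ hne 0)) fun i hi ↦ ?_
      refine ((htot _ _).resolve_right fun h ↦ (hcov i).2 hi ?_).lt_of_ne (hne _)
      exact h.lt_of_ne (hne _).symm
    exact (hlt (Fin.last n)).not_ge (hlast ▸ le_top)
  rw [← Nat.card_eq_of_bijective c ⟨hmono.injective, hsurj⟩, Nat.card_fin]

section PrincipalNilpotentMaximalIdeal

variable {R : Type*} [CommRing R] {π : R}

theorem Ideal.span_singleton_pow_ne_of_lt (hπ : IsNilpotent π) {i j : ℕ} (hij : i < j)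
    (hj : j ≤ nilpotencyClass π) : Ideal.span {π ^ i} ≠ Ideal.span {π ^ j} := by
  intro h
  have hmem : π ^ i ∈ Ideal.span {π ^ (i + 1)} :=
    Ideal.span_singleton_le_span_singleton.mpr (pow_dvd_pow π hij)
      (h ▸ Ideal.mem_span_singleton_self _)
  obtain ⟨b, hb⟩ := Ideal.mem_span_singleton'.mp hmem
  have hzero : π ^ i = 0 := by
    have hu : IsUnit (1 - b * π) := ((Commute.all b π).isNilpotent_mul_left hπ).isUnit_one_sub
    refine (hu.mul_left_eq_zero).mp ?_
    linear_combination -hb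
  have : nilpotencyClass π ≤ i := Nat.sInf_le hzero
  omega

variable [IsLocalRing R]

theorem IsLocalRing.exists_eq_span_singleton_pow (hm : maximalIdeal R = Ideal.span {π})
    (hπ : IsNilpotent π) (J : Ideal R) : ∃ i ≤ nilpotencyClass π, J = Ideal.span {π ^ i} := by
  classical
  set P : ℕ → Prop := fun i ↦ J ≤ Ideal.span {π ^ i}
  set i := Nat.findGreatest P (nilpotencyClass π)
  have hi : i ≤ nilpotencyClass π := Nat.findGreatest_le _
  have hJi : J ≤ Ideal.span {π ^ i} := Nat.findGreatest_spec (P := P) (Nat.zero_le _)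
    (show J ≤ _ by rw [pow_zero, Ideal.span_singleton_one]; exact le_top)
  refine ⟨i, hi, le_antisymm hJi ?_⟩
  rw [Ideal.span_singleton_le_iff_mem]
  rcases hi.eq_or_lt with hik | hik
  · rw [hik, pow_nilpotencyClass hπ]
    exact J.zero_mem
  have hJi' : ¬ J ≤ Ideal.span {π ^ (i + 1)} :=
    Nat.findGreatest_is_greatest (P := P) (Nat.lt_succ_self i) hik
  obtain ⟨a, haJ, ha⟩ := SetLike.not_le_iff_exists.mp hJi'
  obtain ⟨u, rfl⟩ := Ideal.mem_span_singleton'.mp (hJi haJ)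
  have hu : IsUnit u := by
    by_contra hu
    obtain ⟨w, rfl⟩ := Ideal.mem_span_singleton'.mp (hm ▸ (mem_maximalIdeal u).mpr hu)
    exact ha (Ideal.mem_span_singleton'.mpr ⟨w, by ring⟩)
  simpa [← mul_assoc] using J.mul_mem_left ↑hu.unit⁻¹ haJ

theorem IsLocalRing.card_ideal_eq_nilpotencyClass_add_one (hm : maximalIdeal R = Ideal.span {π})
    (hπ : IsNilpotent π) : Nat.card (Ideal R) = nilpotencyClass π + 1 := by
  have hbij :
      Function.Bijective fun i : Fin (nilpotencyClass π + 1) ↦ Ideal.span {π ^ (i : ℕ)} := by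
    refine ⟨fun i j h ↦ Fin.ext ?_, fun J ↦ ?_⟩
    · rcases lt_trichotomy (i : ℕ) j with hij | hij | hij
      · exact absurd h (Ideal.span_singleton_pow_ne_of_lt hπ hij (Nat.lt_succ_iff.mp j.2))
      · exact hij
      · exact absurd h.symm (Ideal.span_singleton_pow_ne_of_lt hπ hij (Nat.lt_succ_iff.mp i.2))
    · obtain ⟨i, hi, rfl⟩ := exists_eq_span_singleton_pow hm hπ J
      exact ⟨⟨i, Nat.lt_succ_of_le hi⟩, rfl⟩
  rw [← Nat.card_eq_of_bijective _ hbij, Nat.card_fin]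

end PrincipalNilpotentMaximalIdeal

theorem IsLocalRing.of_isTotal_ideal {R : Type*} [CommRing R] [Nontrivial R]
    (htot : ∀ I J : Ideal R, I ≤ J ∨ J ≤ I) : IsLocalRing R := by
  obtain ⟨M, hM⟩ := Ideal.exists_maximal R
  refine .of_unique_max_ideal ⟨M, hM, fun J hJ ↦ ?_⟩
  rcases htot J M with h | h
  · exact hJ.eq_of_le hM.ne_top h
  · exact (hM.eq_of_le hJ.ne_top h).symm

theorem IsLocalRing.residue_aeval {F B : Type*} [CommRing F] [CommRing B] [Algebra F B]
    [IsLocalRing B] (b : B) (q : F[X]) : residue B (aeval b q) = aeval (residue B b) q := by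
  rw [← ResidueField.algebraMap_eq, aeval_algebraMap_apply]

theorem IsLocalRing.exists_residue_eq_and_maximalIdeal_eq_span_aeval {F B : Type*} [CommRing F]
    [CommRing B] [Algebra F B] [IsLocalRing B] [Ring.KrullDimLE 0 B] {t : B}
    (ht : maximalIdeal B = Ideal.span {t}) {α : ResidueField B} (hα : (minpoly F α).Separable) :
    ∃ x : B, residue B x = α ∧ maximalIdeal B = Ideal.span {aeval x (minpoly F α)} := by
  set p := minpoly F α
  have hnil {b : B} (hb : b ∈ maximalIdeal B) : IsNilpotent b :=
    Ring.KrullDimLE.isNilpotent_iff_mem_maximalIdeal.mpr hb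
  obtain ⟨a, rfl⟩ := residue_surjective α
  have hpa : IsNilpotent (aeval a p) :=
    hnil <| (residue_eq_zero_iff _).mp <| by rw [residue_aeval, minpoly.aeval]
  have hp'a : IsUnit (aeval a (derivative p)) :=
    (residue_ne_zero_iff_isUnit _).mp <| by
      rw [residue_aeval]; exact hα.aeval_derivative_ne_zero (minpoly.aeval F _)
  obtain ⟨θ, ⟨haθ, hθ⟩, -⟩ := existsUnique_nilpotent_sub_and_aeval_eq_zero hpa hp'a
  have hp'θ : IsUnit (aeval θ (derivative p)) :=
    isUnit_aeval_of_isUnit_aeval_of_isNilpotent_sub hp'a (by simpa using haθ.neg)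
  have htm : t ∈ maximalIdeal B := ht ▸ Ideal.mem_span_singleton_self t
  refine ⟨θ + t, ?_, ?_⟩
  · rw [map_add, (residue_eq_zero_iff t).mpr htm, add_zero, eq_comm, ← sub_eq_zero, ← map_sub,
      residue_eq_zero_iff]
    exact (mem_maximalIdeal _).mpr haθ.not_isUnit
  · -- Taylor: p(θ + t) = t (p'(θ) + u t), and the bracket is a unit as θ is a simple root.
    obtain ⟨u, hu⟩ := binomExpansion (p.map (algebraMap F B)) θ t
    rw [derivative_map, eval_map_algebraMap, eval_map_algebraMap, eval_map_algebraMap, hθ] at hu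
    have hw : IsUnit (aeval θ (derivative p) + u * t) :=
      ((Commute.all u t).isNilpotent_mul_left (hnil htm)).isUnit_add_left_of_commute hp'θ
        (Commute.all _ _)
    rw [hu, ht, ← Ideal.span_singleton_mul_right_unit hw t]
    congr 2
    ring

theorem Subalgebra.eq_top_of_forall_sub_mem_span {R B : Type*} [CommSemiring R] [CommRing B]
    [Algebra R B] (S : Subalgebra R B) {π : B} (hπS : π ∈ S) (hπ : IsNilpotent π)
    (hS : ∀ b, ∃ s ∈ S, b - s ∈ Ideal.span {π}) : S = ⊤ := by
  have key (n : ℕ) (b : B) : ∃ s ∈ S, b - s ∈ Ideal.span {π ^ n} := by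
    induction n generalizing b with
    | zero => exact ⟨0, S.zero_mem, by simp⟩
    | succ n ih =>
      obtain ⟨s, hs, hbs⟩ := ih b
      obtain ⟨c, hc⟩ := Ideal.mem_span_singleton'.mp hbs
      obtain ⟨s', hs', hcs'⟩ := hS c
      obtain ⟨d, hd⟩ := Ideal.mem_span_singleton'.mp hcs'
      refine ⟨s + π ^ n * s', S.add_mem hs (S.mul_mem (S.pow_mem hπS n) hs'),
        Ideal.mem_span_singleton'.mpr ⟨d, ?_⟩⟩
      linear_combination π ^ n * hd + hc
  obtain ⟨n, hn⟩ := hπ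
  refine eq_top_iff.mpr fun b _ ↦ ?_
  obtain ⟨s, hs, hbs⟩ := key n b
  rw [hn, Ideal.span_singleton_eq_bot.mpr rfl, Ideal.mem_bot, sub_eq_zero] at hbs
  exact hbs ▸ hs

theorem minpoly_eq_pow_nilpotencyClass {F B : Type*} [Field F] [Ring B] [Nontrivial B]
    [Algebra F B] {x : B} {p : F[X]} (hp : p.Monic) (hirr : Irreducible p)
    (hnil : IsNilpotent (aeval x p)) : minpoly F x = p ^ nilpotencyClass (aeval x p) := by
  set k := nilpotencyClass (aeval x p)
  have hk : aeval x (p ^ k) = 0 := by rw [map_pow, pow_nilpotencyClass hnil]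
  have hint : IsIntegral F x := ⟨_, hp.pow k, hk⟩
  obtain ⟨i, hik, hi⟩ := (dvd_prime_pow hirr.prime k).mp (minpoly.dvd F x hk)
  have hmin : minpoly F x = p ^ i := eq_of_monic_of_associated (minpoly.monic hint) (hp.pow i) hi
  have hki : k ≤ i :=
    Nat.sInf_le (show aeval x p ^ i = 0 by rw [← map_pow, ← hmin, minpoly.aeval])
  rw [hmin, le_antisymm hik hki]

theorem exists_adjoin_eq_top_minpoly_eq_pow (F B : Type*) [Field F] [PerfectField F] [CommRing B]
    [Algebra F B] [FiniteDimensional F B] [Nontrivial B] (htot : ∀ I J : Ideal B, I ≤ J ∨ J ≤ I) :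
    ∃ x : B, Algebra.adjoin F {x} = ⊤ ∧ ∃ p : F[X], p.Monic ∧ Irreducible p ∧
      ∃ k, minpoly F x = p ^ k ∧ Nat.card (Ideal B) = k + 1 := by
  have := IsLocalRing.of_isTotal_ideal htot
  have := IsArtinianRing.of_finite F B
  obtain ⟨t, ht⟩ := Submodule.exists_eq_span_singleton_of_isTotal htot (maximalIdeal B)
  obtain ⟨α, hα⟩ := Field.exists_primitive_element F (ResidueField B)
  have hint : IsIntegral F α := Algebra.IsIntegral.isIntegral α
  obtain ⟨x, hxα, hm⟩ :=
    exists_residue_eq_and_maximalIdeal_eq_span_aeval ht (Algebra.IsSeparable.isSeparable F α)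
  set p := minpoly F α
  have hπ : IsNilpotent (aeval x p) :=
    Ring.KrullDimLE.isNilpotent_iff_mem_maximalIdeal.mpr (hm ▸ Ideal.mem_span_singleton_self _)
  refine ⟨x, ?_, p, minpoly.monic hint, minpoly.irreducible hint, _,
    minpoly_eq_pow_nilpotencyClass (minpoly.monic hint) (minpoly.irreducible hint) hπ,
    card_ideal_eq_nilpotencyClass_add_one hm hπ⟩
  refine Subalgebra.eq_top_of_forall_sub_mem_span _ (aeval_mem_adjoin_singleton F x) hπ fun b ↦ ?_
  have hb : residue B b ∈ Algebra.adjoin F {α} := by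
    rw [← IntermediateField.adjoin_simple_toSubalgebra_of_isAlgebraic hint.isAlgebraic, hα]
    trivial
  obtain ⟨q, hq⟩ := (Algebra.adjoin_singleton_eq_range_aeval F α ▸ hb :)
  refine ⟨aeval x q, aeval_mem_adjoin_singleton F x, hm ▸ ?_⟩
  rw [← residue_eq_zero_iff, map_sub, residue_aeval, hxα, ← hq]
  exact sub_self _

/-- `A` modulo the annihilator of `V`, i.e. the image of `A` in `End_F V`. -/
abbrev ActionQuotient (F A V : Type*) [CommRing F] [CommRing A] [Algebra F A] [AddCommGroup V]
    [Module F V] [Module A V] [IsScalarTower F A V] :=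
  A ⧸ RingHom.ker (Algebra.lsmul F F V : A →ₐ[F] Module.End F V)

namespace ActionQuotient

variable (F : Type*) {A V : Type*} [CommRing F] [CommRing A] [Algebra F A] [AddCommGroup V]
  [Module F V] [Module A V] [IsScalarTower F A V]

theorem minpoly_actEnd (x : A) :
    minpoly F (actEnd F V x) = minpoly F (Ideal.Quotient.mk _ x : ActionQuotient F A V) := by
  rw [← minpoly.algHom_eq _ (Ideal.kerLiftAlg_injective _), Ideal.kerLiftAlg_mk]
  rfl

theorem exists_actEnd_eq_aeval {x : A}
    (hx : Algebra.adjoin F {(Ideal.Quotient.mk _ x : ActionQuotient F A V)} = ⊤) (a : A) :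
    ∃ q : F[X], actEnd F V a = aeval (actEnd F V x) q := by
  obtain ⟨q, hq⟩ :
      Ideal.Quotient.mk _ a ∈ (aeval (Ideal.Quotient.mk _ x : ActionQuotient F A V)).range := by
    rw [← Algebra.adjoin_singleton_eq_range_aeval F, hx]
    trivial
  refine ⟨q, ?_⟩
  have := congrArg (Ideal.kerLiftAlg (Algebra.lsmul F F V : A →ₐ[F] Module.End F V)) hq
  rwa [Ideal.kerLiftAlg_mk, AlgHom.toRingHom_eq_coe, RingHom.coe_coe, ← aeval_algHom_apply,
    Ideal.kerLiftAlg_mk, eq_comm] at this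

noncomputable def linearEquiv {v₀ : V} (hv₀ : A ∙ v₀ = ⊤) : ActionQuotient F A V ≃ₗ[A] V :=
  have hker : LinearMap.ker (LinearMap.toSpanSingleton A V v₀) =
      RingHom.ker (Algebra.lsmul F F V : A →ₐ[F] Module.End F V) := by
    rw [← Submodule.annihilator_span_singleton, hv₀, Submodule.annihilator_top]
    ext a
    simp [Module.mem_annihilator, LinearMap.ext_iff]
  (Submodule.quotEquivOfEq _ _ hker).symm ≪≫ₗ
    (LinearMap.toSpanSingleton A V v₀).quotKerEquivOfSurjective
      (LinearMap.range_eq_top.mp (by rw [← LinearMap.span_singleton_eq_range, hv₀]))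

noncomputable def orderIso {v₀ : V} (hv₀ : A ∙ v₀ = ⊤) :
    Submodule A V ≃o Ideal (ActionQuotient F A V) :=
  Submodule.orderIsoMapComapOfBijective (σ₁₂ := Ideal.Quotient.mk _)
    { toFun := (linearEquiv F hv₀).symm
      map_add' := map_add _
      map_smul' := fun a v ↦ by simp [Algebra.smul_def] }
    (linearEquiv F hv₀).symm.bijective

end ActionQuotient

theorem Module.AEval'.le_or_le_of_forall_actEnd_eq_aeval {F A V : Type*} [CommSemiring F] [Ring A]
    [Algebra F A] [AddCommGroup V] [Module F V] [Module A V] [IsScalarTower F A V]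
    {T : Module.End F V}
    (hT : ∀ a : A, ∃ q : F[X], actEnd F V a = aeval T q)
    (htot : ∀ U₁ U₂ : Submodule A V, U₁ ≤ U₂ ∨ U₂ ≤ U₁) (W₁ W₂ : Submodule F[X] (AEval' T)) :
    W₁ ≤ W₂ ∨ W₂ ≤ W₁ := by
  let U (W : Submodule F[X] (AEval' T)) : Submodule A V :=
    { carrier := AEval'.of T ⁻¹' W
      add_mem' := by simp +contextual [W.add_mem]
      zero_mem' := by simp
      smul_mem' := fun a v hv ↦ by
        obtain ⟨q, hq⟩ := hT a
        have : a • v = aeval T q v := congr($hq v)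
        rw [Set.mem_preimage, this]
        exact W.smul_mem q hv }
  have hle {W W'} (h : U W ≤ U W') : W ≤ W' := fun w hw ↦ by
    simpa [U] using h (show (AEval'.of T).symm w ∈ U W by simpa [U])
  exact (htot (U W₁) (U W₂)).imp hle hle

/-- **Corollary (t1).** Let `F` be a perfect field, `A` a commutative associative unital
`F`-algebra, and `V` a finite-dimensional uniserial `A`-module of composition length
`ℓ`.  Then there is `x ∈ A` such that `V` is a uniserial `F[x]`-module (i.e. `V`,
viewed as an `F[X]`-module via the action of `x`, is uniserial); moreover the minimal
polynomial of the action of `x` on `V` is `p^ℓ` for a monic irreducible `p ∈ F[X]` with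
`ℓ·deg p = dim_F V` (so `x` acts by a cyclic endomorphism, the companion matrix of
`p^ℓ` in a suitable basis), and every `a ∈ A` acts on `V` as a polynomial in the action
of `x`. -/
theorem stmt13 (F : Type*) [Field F] [PerfectField F]
    (A : Type*) [CommRing A] [Algebra F A]
    (V : Type*) [AddCommGroup V] [Module F V] [Module A V] [IsScalarTower F A V]
    [FiniteDimensional F V]
    (huni : Nontrivial V ∧ ∀ W₁ W₂ : Submodule A V, W₁ ≤ W₂ ∨ W₂ ≤ W₁)
    (ℓ : ℕ)
    (hlen : ∃ c : Fin (ℓ + 1) → Submodule A V, c 0 = ⊥ ∧ c (Fin.last ℓ) = ⊤ ∧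
      ∀ i : Fin ℓ, c i.castSucc ⋖ c i.succ) :
    ∃ x : A,
      (∀ W₁ W₂ : Submodule (Polynomial F) (Module.AEval' (actEnd F V x)),
        W₁ ≤ W₂ ∨ W₂ ≤ W₁) ∧
      ∃ p : Polynomial F, p.Monic ∧ Irreducible p ∧
        minpoly F (actEnd F V x) = p ^ ℓ ∧
        ℓ * p.natDegree = Module.finrank F V ∧
        ∀ a : A, ∃ q : Polynomial F,
          actEnd F V a = Polynomial.aeval (actEnd F V x) q := by
  obtain ⟨hV, htot⟩ := huni
  obtain ⟨c, hc0, hcl, hcov⟩ := hlen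
  have : IsNoetherian A V := isNoetherian_of_tower F inferInstance
  obtain ⟨v₀, hv₀⟩ := Submodule.exists_eq_span_singleton_of_isTotal htot ⊤
  set e := ActionQuotient.linearEquiv F hv₀.symm
  set Φ := ActionQuotient.orderIso F hv₀.symm
  have : Nontrivial (ActionQuotient F A V) := e.toEquiv.nontrivial
  have : FiniteDimensional F (ActionQuotient F A V) := .equiv (e.symm.restrictScalars F)
  obtain ⟨x', hadj, p, hp, hirr, k, hmin, hcard⟩ := exists_adjoin_eq_top_minpoly_eq_pow F
    (ActionQuotient F A V) fun I J ↦ by simpa using htot (Φ.symm I) (Φ.symm J)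
  obtain rfl : ℓ = k := by
    have := Nat.card_eq_of_covBy_chain htot c hc0 hcl hcov
    rw [Nat.card_congr Φ.toEquiv, hcard] at this
    omega
  obtain ⟨x, rfl⟩ := Ideal.Quotient.mk_surjective x'
  have hpoly := ActionQuotient.exists_actEnd_eq_aeval F hadj
  refine ⟨x, Module.AEval'.le_or_le_of_forall_actEnd_eq_aeval hpoly htot, p, hp, hirr,
    (ActionQuotient.minpoly_actEnd F x).trans hmin, ?_, hpoly⟩
  rw [(e.restrictScalars F).finrank_eq.symm, (IsAdjoinRootMonic.mkOfAdjoinEqTop' hadj).finrank,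
    hmin, natDegree_pow]
end

section
/- Let F be an algebraically closed field, let g be an abelian Lie algebra over F, and let V be a uniserial g-module of finite dimension m. Then there exists x ∈ g whose action u on V satisfies (u − α·id)^m = 0 and (u − α·id)^{m−1} ≠ 0 for some α ∈ F (that is, u is represented by the m×m Jordan block J_m(α) relative to some basis of V), and every element of g acts on V as a polynomial in u. -/
/-!
Since `g` is abelian, the generalized weight spaces of `V` are Lie submodules and independent;
as they are totally ordered, `V` is a single generalized weight space for some `χ`, so every
`N y = toEnd y - χ y` is nilpotent and commutes with the whole action. Kernels of the `N y` are
submodules, hence totally ordered, so some `N x` has the smallest kernel; every subspace of that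
kernel is killed by all `N y`, hence is a submodule, so `ker (N x)` has dimension at most `1`.
A nilpotent operator with a one-dimensional kernel is a single Jordan block: it has a cyclic
vector, and whatever commutes with it is a polynomial in it.
-/

open LieModule Module Polynomial

theorem Submodule.finrank_le_one_of_le_total {K V : Type*} [Field K] [AddCommGroup V] [Module K V]
    {p : Submodule K V} (h : ∀ q₁ q₂ : Submodule K V, q₁ ≤ p → q₂ ≤ p → q₁ ≤ q₂ ∨ q₂ ≤ q₁) :
    finrank K p ≤ 1 := by
  obtain rfl | hp := eq_or_ne p ⊥
  · simp
  obtain ⟨v, hvp, hv⟩ := p.ne_bot_iff.1 hp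
  refine (Submodule.finrank_mono fun w hw => ?_).trans (finrank_span_singleton hv).le
  rcases h (K ∙ w) (K ∙ v) ((span_singleton_le_iff_mem _ _).2 hw)
    ((span_singleton_le_iff_mem _ _).2 hvp) with hwv | hvw
  · exact hwv (mem_span_singleton_self w)
  · obtain ⟨c, rfl⟩ := mem_span_singleton.1 (hvw (mem_span_singleton_self _))
    have hc : IsUnit c := isUnit_iff_ne_zero.2 (left_ne_zero_of_smul hv)
    rw [span_singleton_smul_eq hc]
    exact mem_span_singleton_self w

namespace Module.End

variable {K V : Type*} [Field K] [AddCommGroup V] [Module K V]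

def IsCyclicVector (u : End K V) (v : V) : Prop :=
  ∀ w : V, ∃ p : K[X], aeval u p v = w

theorem ker_mem_invtSubmodule_of_commute {f u : End K V} (h : Commute f u) :
    LinearMap.ker f ∈ u.invtSubmodule := fun v (hv : f v = 0) =>
  show f (u v) = 0 by rw [← mul_apply, h.eq, mul_apply, hv, map_zero]

theorem _root_.IsNilpotent.pow_finrank_eq_zero [FiniteDimensional K V] {u : End K V}
    (hu : IsNilpotent u) : u ^ finrank K V = 0 := by
  obtain ⟨k, hk⟩ := hu
  rw [← LinearMap.ker_eq_top, eq_top_iff]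
  simpa [hk] using u.ker_pow_le_ker_pow_finrank k

theorem finrank_ker_pow_le [FiniteDimensional K V] (u : End K V) (k : ℕ) :
    finrank K (LinearMap.ker (u ^ k)) ≤ k * finrank K (LinearMap.ker u) := by
  induction k with
  | zero => simp [one_eq_id]
  | succ k ih =>
    have h := LinearMap.lift_rank_comap_le (f := u) (LinearMap.ker (u ^ k))
    simp only [Cardinal.lift_id, ← finrank_eq_rank] at h
    rw [pow_succ, mul_eq_comp, LinearMap.ker_comp, Nat.succ_mul]
    have : finrank K (Submodule.comap u (LinearMap.ker (u ^ k))) ≤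
        finrank K (LinearMap.ker (u ^ k)) + finrank K (LinearMap.ker u) := by
      exact_mod_cast h
    omega

theorem pow_finrank_sub_one_ne_zero [FiniteDimensional K V] [Nontrivial V] {u : End K V}
    (hu : finrank K (LinearMap.ker u) ≤ 1) : u ^ (finrank K V - 1) ≠ 0 := by
  intro h
  have hker := u.finrank_ker_pow_le (finrank K V - 1)
  rw [h, LinearMap.ker_zero, finrank_top] at hker
  have := Nat.mul_le_mul_left (finrank K V - 1) hu
  have := finrank_pos (R := K) (M := V)
  omega

theorem exists_isCyclicVector [FiniteDimensional K V] {u : End K V} (hu : IsNilpotent u)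
    (h : u ^ (finrank K V - 1) ≠ 0) : ∃ v, u.IsCyclicVector v := by
  obtain ⟨v, hv⟩ : ∃ v, (u ^ (finrank K V - 1)) v ≠ 0 := by
    by_contra! hv
    exact h (LinearMap.ext hv)
  let C : Submodule K V := LinearMap.range ((LinearMap.applyₗ v).comp (aeval u).toLinearMap)
  have mem_C (p : K[X]) : aeval u p v ∈ C := ⟨p, rfl⟩
  have hC : ∀ w ∈ C, u w ∈ C := by
    rintro _ ⟨p, rfl⟩
    have := mem_C (X * p)
    rwa [aeval_mul, aeval_X, mul_apply] at this
  -- On a proper `C` the nilpotent restriction of `u` would have `(finrank K V - 1)`-st power `0`.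
  have hCV : finrank K C = finrank K V := by
    refine le_antisymm (Submodule.finrank_le C) (not_lt.1 fun hlt => hv ?_)
    have hres : u.restrict hC ^ (finrank K V - 1) = 0 :=
      pow_eq_zero_of_le (by omega) (isNilpotent.restrict hC hu).pow_finrank_eq_zero
    have := LinearMap.congr_fun hres ⟨v, by simpa using mem_C 1⟩
    rw [pow_restrict, LinearMap.restrict_apply] at this
    exact congr_arg Subtype.val this
  exact ⟨v, fun w => (Submodule.eq_top_of_finrank_eq hCV).ge (Submodule.mem_top (x := w))⟩

theorem IsCyclicVector.exists_eq_aeval_of_commute {u f : End K V} {v : V}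
    (hv : u.IsCyclicVector v) (hf : Commute f u) : ∃ p : K[X], f = aeval u p := by
  obtain ⟨p, hp⟩ := hv (f v)
  refine ⟨p, LinearMap.ext fun w => ?_⟩
  obtain ⟨q, rfl⟩ := hv w
  have hfq : Commute f (aeval u q) :=
    Algebra.commute_of_mem_adjoin_singleton_of_commute (aeval_mem_adjoin_singleton K u) hf
  calc f (aeval u q v) = aeval u q (f v) := by rw [← mul_apply, hfq.eq, mul_apply]
    _ = aeval u p (aeval u q v) := by
      rw [← hp, ← mul_apply, ← aeval_mul, mul_comm, aeval_mul, mul_apply]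

end Module.End

namespace LieModule

variable {F g V : Type*} [Field F] [LieRing g] [LieAlgebra F g]
  [AddCommGroup V] [Module F V] [LieRingModule g V] [LieModule F g V]

theorem commute_toEnd_of_isLieAbelian [IsLieAbelian g] (x y : g) :
    Commute (toEnd F g V x) (toEnd F g V y) :=
  commute_toEnd_of_mem_center_left V
    (by simp [(LieAlgebra.isLieAbelian_iff_center_eq_top F g).1 ‹_›]) y

theorem le_total_of_forall_mem_invtSubmodule
    (huni : ∀ W₁ W₂ : LieSubmodule F g V, W₁ ≤ W₂ ∨ W₂ ≤ W₁) {p q : Submodule F V}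
    (hp : ∀ x, p ∈ (toEnd F g V x).invtSubmodule) (hq : ∀ x, q ∈ (toEnd F g V x).invtSubmodule) :
    p ≤ q ∨ q ≤ p :=
  huni ⟨p, fun {x _} hm => hp x hm⟩ ⟨q, fun {x _} hm => hq x hm⟩

theorem exists_genWeightSpace_eq_top [LieRing.IsNilpotent g] [FiniteDimensional F V]
    [IsTriangularizable F g V] [Nontrivial V]
    (huni : ∀ W₁ W₂ : LieSubmodule F g V, W₁ ≤ W₂ ∨ W₂ ≤ W₁) :
    ∃ χ : g → F, genWeightSpace V χ = ⊤ := by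
  obtain ⟨χ, hχ⟩ : ∃ χ : g → F, genWeightSpace V χ ≠ ⊥ := by
    by_contra! h
    simpa [h] using iSup_genWeightSpace_eq_top F g V
  refine ⟨χ, eq_top_iff.2 ((iSup_genWeightSpace_eq_top F g V).ge.trans (iSup_le fun ψ => ?_))⟩
  obtain rfl | hψ := eq_or_ne ψ χ
  · exact le_rfl
  exact (huni _ _).resolve_right fun h => hχ ((disjoint_genWeightSpace F g V hψ).eq_bot_of_ge h)

theorem isNilpotent_toEnd_sub_smul_of_genWeightSpace_eq_top [LieRing.IsNilpotent g]
    [FiniteDimensional F V] {χ : g → F} (h : genWeightSpace V χ = ⊤) (x : g) :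
    _root_.IsNilpotent (toEnd F g V x - χ x • 1) :=
  ((LinearMap.charpoly_nilpotent_tfae _).out 2 0).1 fun v =>
    (mem_genWeightSpace V χ v).1 (h ▸ Submodule.mem_top) x

theorem exists_finrank_ker_toEnd_sub_smul_le_one [IsLieAbelian g] [FiniteDimensional F V]
    (huni : ∀ W₁ W₂ : LieSubmodule F g V, W₁ ≤ W₂ ∨ W₂ ≤ W₁) (χ : g → F) :
    ∃ x : g, finrank F (LinearMap.ker (toEnd F g V x - χ x • 1)) ≤ 1 := by
  set N : g → End F V := fun y => toEnd F g V y - χ y • 1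
  have hN (y z : g) : LinearMap.ker (N y) ∈ (toEnd F g V z).invtSubmodule :=
    End.ker_mem_invtSubmodule_of_commute
      ((commute_toEnd_of_isLieAbelian y z).sub_left ((Commute.one_left _).smul_left _))
  set d : g → ℕ := fun y => finrank F (LinearMap.ker (N y))
  set x := Function.argmin d
  have hmin (y : g) : LinearMap.ker (N x) ≤ LinearMap.ker (N y) :=
    (le_total_of_forall_mem_invtSubmodule huni (hN x) (hN y)).elim id fun h =>
      (Submodule.eq_of_le_of_finrank_le h (Function.argmin_le d y)).ge
  have hsub {q : Submodule F V} (hq : q ≤ LinearMap.ker (N x)) (z : g) :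
      q ∈ (toEnd F g V z).invtSubmodule := fun w hw => by
    have : N z w = 0 := hmin z (hq hw)
    simpa [N, sub_eq_zero.1 this] using q.smul_mem (χ z) hw
  exact ⟨x, Submodule.finrank_le_one_of_le_total fun q₁ q₂ h₁ h₂ =>
    le_total_of_forall_mem_invtSubmodule huni (hsub h₁) (hsub h₂)⟩

end LieModule

/-- **Corollary (dernier), Lie case.** Let `F` be an algebraically closed field, `g` an
abelian Lie algebra over `F`, and `V` a uniserial `g`-module of finite dimension `m`.
Then there is `x ∈ g` whose action `u` on `V` satisfies `(u - α·id)^m = 0` and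
`(u - α·id)^(m-1) ≠ 0` for some `α ∈ F` (i.e. `u` is represented by the Jordan block
`J_m(α)` in a suitable basis), and every element of `g` acts on `V` as a polynomial
in `u`. -/
theorem stmt15 (F : Type*) [Field F] [IsAlgClosed F]
    (g : Type*) [LieRing g] [LieAlgebra F g] (habelian : IsLieAbelian g)
    (V : Type*) [AddCommGroup V] [Module F V] [LieRingModule g V] [LieModule F g V]
    [FiniteDimensional F V]
    (huni : Nontrivial V ∧ ∀ W₁ W₂ : LieSubmodule F g V, W₁ ≤ W₂ ∨ W₂ ≤ W₁)
    (m : ℕ) (hm : Module.finrank F V = m) :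
    ∃ (x : g) (α : F),
      (LieModule.toEnd F g V x - α • 1) ^ m = 0 ∧
      (LieModule.toEnd F g V x - α • 1) ^ (m - 1) ≠ 0 ∧
      ∀ y : g, ∃ q : Polynomial F,
        LieModule.toEnd F g V y = Polynomial.aeval (LieModule.toEnd F g V x) q := by
  obtain ⟨_, huni⟩ := huni
  subst hm
  obtain ⟨χ, hχ⟩ := exists_genWeightSpace_eq_top huni
  obtain ⟨x, hx⟩ := exists_finrank_ker_toEnd_sub_smul_le_one huni χ
  have hnil := isNilpotent_toEnd_sub_smul_of_genWeightSpace_eq_top hχ x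
  have hne := End.pow_finrank_sub_one_ne_zero hx
  obtain ⟨v, hv⟩ := End.exists_isCyclicVector hnil hne
  refine ⟨x, χ x, hnil.pow_finrank_eq_zero, hne, fun y => ?_⟩
  obtain ⟨p, hp⟩ := hv.exists_eq_aeval_of_commute
    ((commute_toEnd_of_isLieAbelian y x).sub_right ((Commute.one_right _).smul_right _))
  refine ⟨p.comp (X - C (χ x)), ?_⟩
  rw [hp, aeval_comp, map_sub, aeval_X, aeval_C, Algebra.algebraMap_eq_smul_one]
end

section
/- Let F be an imperfect field of prime characteristic p (that is, the Frobenius map of F is not surjective). Then there exist a commutative associative unital F-algebra A of dimension 2p and a faithful uniserial A-module V of dimension 2p over F, such that no element x ∈ A satisfies A = F[x]; in fact, every x ∈ A satisfies x^p ∈ F·1, so dim_F F[x] ≤ p < 2p = dim_F A. -/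
universe u

open TrivSqZeroExt in
theorem stmt16_aux (F : Type u) (K : Type u) [Field F] [Field K] [Algebra F K]
    (p : ℕ) (hp : p.Prime) [CharP F p]
    (hdim : Module.finrank F K = p)
    (hpow : ∀ y : K, ∃ c : F, y ^ p = algebraMap F K c) :
    ∃ (A : Type u) (_ : CommRing A) (_ : Algebra F A),
      Module.finrank F A = 2 * p ∧
      ∃ (V : Type u) (_ : AddCommGroup V) (_ : Module A V) (_ : Module F V)
        (_ : IsScalarTower F A V),
        Module.finrank F V = 2 * p ∧
        FaithfulSMul A V ∧
        (Nontrivial V ∧ ∀ W₁ W₂ : Submodule A V, W₁ ≤ W₂ ∨ W₂ ≤ W₁) ∧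
        (∀ x : A, ∃ c : F, x ^ p = algebraMap F A c) ∧
        (∀ x : A, Module.finrank F (Algebra.adjoin F {x}) ≤ p) ∧
        (∀ x : A, Algebra.adjoin F {x} ≠ ⊤) := by
  haveI : CharP K p := charP_of_injective_algebraMap (algebraMap F K).injective p
  haveI : FiniteDimensional F K := by
    apply FiniteDimensional.of_finrank_pos
    rw [hdim]; exact hp.pos
  have e : TrivSqZeroExt K K ≃ₗ[F] K × K :=
    { toFun := fun x => (x.fst, x.snd)
      invFun := fun x => ⟨x.1, x.2⟩
      map_add' := fun _ _ => rfl
      map_smul' := fun _ _ => rfl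
      left_inv := fun _ => rfl
      right_inv := fun _ => rfl }
  have hrk : Module.finrank F (TrivSqZeroExt K K) = 2 * p := by
    rw [e.finrank_eq, Module.finrank_prod, hdim, two_mul]
  haveI : FiniteDimensional F (TrivSqZeroExt K K) :=
    Module.Finite.equiv e.symm
  -- every p-th power is scalar
  have hxp : ∀ x : TrivSqZeroExt K K, ∃ c : F, x ^ p = algebraMap F (TrivSqZeroExt K K) c := by
    intro x
    obtain ⟨c, hc⟩ := hpow x.fst
    refine ⟨c, TrivSqZeroExt.ext ?_ ?_⟩
    · rw [fst_pow, hc, algebraMap_eq_inl', fst_inl]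
    · rw [snd_pow, algebraMap_eq_inl', snd_inl]
      rw [smul_comm]
      simp [CharP.cast_eq_zero K p, Nat.cast_smul_eq_nsmul]
  have hfaith : FaithfulSMul (TrivSqZeroExt K K) (TrivSqZeroExt K K) :=
    ⟨fun {a b} h => by simpa [smul_eq_mul] using h 1⟩
  have hbound : ∀ x : TrivSqZeroExt K K,
      Module.finrank F (Algebra.adjoin F {x}) ≤ p := by
    intro x
    obtain ⟨c, hc⟩ := hxp x
    have hle : Subalgebra.toSubmodule (Algebra.adjoin F {x}) ≤
        Submodule.span F (Set.range fun i : Fin p => x ^ (i : ℕ)) := by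
      rw [Algebra.adjoin_eq_span, Submodule.span_le]
      intro y hy
      obtain ⟨n, rfl⟩ := Submonoid.mem_closure_singleton.mp hy
      have : x ^ n = (c ^ (n / p)) • x ^ (n % p) := by
        rw [Algebra.smul_def, map_pow, ← hc, ← pow_mul, ← pow_add, Nat.div_add_mod]
      rw [this]
      exact Submodule.smul_mem _ _ (Submodule.subset_span
        ⟨⟨n % p, Nat.mod_lt _ hp.pos⟩, rfl⟩)
    calc Module.finrank F (Algebra.adjoin F {x})
        ≤ Module.finrank F (Submodule.span F (Set.range fun i : Fin p => x ^ (i : ℕ))) :=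
          Submodule.finrank_mono hle
      _ ≤ p := by
          classical
          refine (finrank_span_le_card _).trans ?_
          rw [Set.toFinset_card]
          exact (Fintype.card_range_le _).trans (by simp)
  refine ⟨TrivSqZeroExt K K, inferInstance, inferInstance, hrk, TrivSqZeroExt K K,
    inferInstance, inferInstance, inferInstance, inferInstance, hrk, hfaith,
    ⟨inferInstance, ?_⟩, hxp, hbound, ?_⟩
  · -- uniserial
    intro W₁ W₂
    by_cases h12 : W₁ ≤ W₂
    · exact Or.inl h12
    right
    obtain ⟨w, hw1, hw2⟩ := Set.not_subset.mp h12
    -- W₂ cannot contain a unit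
    have hW₂unit : ∀ y ∈ W₂, ¬ IsUnit y := by
      intro y hy hu
      apply hw2
      obtain ⟨u, rfl⟩ := hu
      have h1 : (1 : TrivSqZeroExt K K) ∈ W₂ := by
        simpa [smul_eq_mul] using W₂.smul_mem (↑u⁻¹) hy
      simpa [smul_eq_mul] using W₂.smul_mem w h1
    by_cases hfw : fst w = 0
    · -- w = inr (snd w), snd w ≠ 0
      have hsw : snd w ≠ 0 := by
        rintro hsw
        apply hw2
        have : w = 0 := TrivSqZeroExt.ext hfw hsw
        rw [this]; exact W₂.zero_mem
      intro y hy
      have hfy : fst y = 0 := by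
        by_contra hfy
        exact hW₂unit y hy (isUnit_iff_isUnit_fst.mpr (isUnit_iff_ne_zero.mpr hfy))
      have : y = inl (snd y / snd w) * w := by
        refine TrivSqZeroExt.ext ?_ ?_
        · rw [fst_mul, fst_inl, hfw, mul_zero, hfy]
        · rw [snd_mul, snd_inl, fst_inl, hfw]
          simp [smul_eq_mul, div_mul_cancel₀ _ hsw]
      rw [this]
      simpa [smul_eq_mul] using W₁.smul_mem (inl (snd y / snd w)) hw1
    · -- w is a unit, so W₁ = ⊤
      have hu : IsUnit w := isUnit_iff_isUnit_fst.mpr (isUnit_iff_ne_zero.mpr hfw)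
      obtain ⟨u, rfl⟩ := hu
      have h1 : (1 : TrivSqZeroExt K K) ∈ W₁ := by
        simpa [smul_eq_mul] using W₁.smul_mem (↑u⁻¹) hw1
      intro y _
      simpa [smul_eq_mul] using W₁.smul_mem y h1
  · -- adjoin ≠ ⊤
    intro x htop
    have h1 : Module.finrank F (TrivSqZeroExt K K)
        = Module.finrank F (Algebra.adjoin F {x}) := by
      rw [htop, ← Subalgebra.finrank_toSubmodule, Algebra.top_toSubmodule, finrank_top]
    have := hbound x
    rw [← h1, hrk] at this
    have := hp.pos
    omega


/-- **Note (menti).** Let `F` be an imperfect field of prime characteristic `p` (the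
Frobenius map is not surjective).  Then there exist a commutative associative unital
`F`-algebra `A` of dimension `2p` and a faithful uniserial `A`-module `V` of dimension
`2p` over `F` such that no `x ∈ A` satisfies `A = F[x]`; in fact every `x ∈ A`
satisfies `x^p ∈ F·1`, so `dim_F F[x] ≤ p < 2p = dim_F A`. -/
theorem stmt16 (F : Type u) [Field F] (p : ℕ) (hp : p.Prime) [CharP F p]
    (himp : ¬ Function.Surjective fun a : F => a ^ p) :
    ∃ (A : Type u) (_ : CommRing A) (_ : Algebra F A),
      Module.finrank F A = 2 * p ∧
      ∃ (V : Type u) (_ : AddCommGroup V) (_ : Module A V) (_ : Module F V)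
        (_ : IsScalarTower F A V),
        Module.finrank F V = 2 * p ∧
        FaithfulSMul A V ∧
        (Nontrivial V ∧ ∀ W₁ W₂ : Submodule A V, W₁ ≤ W₂ ∨ W₂ ≤ W₁) ∧
        (∀ x : A, ∃ c : F, x ^ p = algebraMap F A c) ∧
        (∀ x : A, Module.finrank F (Algebra.adjoin F {x}) ≤ p) ∧
        (∀ x : A, Algebra.adjoin F {x} ≠ ⊤) := by
  rw [Function.Surjective] at himp
  push_neg at himp
  obtain ⟨b, hb⟩ := himp
  have hirr : Irreducible (Polynomial.X ^ p - Polynomial.C b : Polynomial F) :=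
    X_pow_sub_C_irreducible_of_prime hp hb
  haveI : Fact (Irreducible (Polynomial.X ^ p - Polynomial.C b : Polynomial F)) := ⟨hirr⟩
  haveI : Fact p.Prime := ⟨hp⟩
  have hdim : Module.finrank F (AdjoinRoot (Polynomial.X ^ p - Polynomial.C b : Polynomial F)) = p := by
    rw [(AdjoinRoot.powerBasis (f := (Polynomial.X ^ p - Polynomial.C b : Polynomial F))
      hirr.ne_zero).finrank]
    simp [AdjoinRoot.powerBasis, Polynomial.natDegree_X_pow_sub_C]
  haveI : CharP (AdjoinRoot (Polynomial.X ^ p - Polynomial.C b : Polynomial F)) p :=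
    charP_of_injective_algebraMap
      (algebraMap F (AdjoinRoot (Polynomial.X ^ p - Polynomial.C b : Polynomial F))).injective p
  have hpow : ∀ y : AdjoinRoot (Polynomial.X ^ p - Polynomial.C b : Polynomial F),
      ∃ c : F, y ^ p = algebraMap F _ c := by
    intro y
    have hmem : y ∈ Algebra.adjoin F
        ({AdjoinRoot.root (Polynomial.X ^ p - Polynomial.C b : Polynomial F)} :
          Set (AdjoinRoot (Polynomial.X ^ p - Polynomial.C b : Polynomial F))) := by
      rw [AdjoinRoot.adjoinRoot_eq_top]; trivial
    induction hmem using Algebra.adjoin_induction with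
    | mem z hz =>
      rw [Set.mem_singleton_iff] at hz
      subst hz
      refine ⟨b, ?_⟩
      have h0 := AdjoinRoot.eval₂_root (Polynomial.X ^ p - Polynomial.C b : Polynomial F)
      rw [Polynomial.eval₂_sub, Polynomial.eval₂_pow, Polynomial.eval₂_X,
        Polynomial.eval₂_C, sub_eq_zero] at h0
      rw [h0, AdjoinRoot.algebraMap_eq]
    | algebraMap c => exact ⟨c ^ p, by rw [map_pow]⟩
    | add u v _ _ hu hv =>
      obtain ⟨cu, hcu⟩ := hu
      obtain ⟨cv, hcv⟩ := hv
      exact ⟨cu + cv, by rw [add_pow_char, hcu, hcv, map_add]⟩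
    | mul u v _ _ hu hv =>
      obtain ⟨cu, hcu⟩ := hu
      obtain ⟨cv, hcv⟩ := hv
      exact ⟨cu * cv, by rw [mul_pow, hcu, hcv, map_mul]⟩
  exact stmt16_aux F _ p hp hdim hpow
end

section
/- Let F be a field, let A be a commutative associative unital F-algebra, and let V be a finite-dimensional faithful uniserial A-module. Then V is cyclic: there exists v ∈ V with V = Av and with trivial annihilator, i.e., {a ∈ A : a·v = 0} = 0. Consequently the map a ↦ a·v is an isomorphism of A-modules A ≅ V, and the regular module of A is uniserial. -/
/-- **Note (cyclic).** Let `F` be a field, `A` a commutative associative unital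
`F`-algebra, and `V` a finite-dimensional faithful uniserial `A`-module.  Then `V` is
cyclic: there is `v ∈ V` with `V = Av` and trivial annihilator; consequently
`a ↦ a·v` is an isomorphism of `A`-modules `A ≅ V`, and the regular module of `A` is
uniserial. -/
theorem stmt17 (F : Type*) [Field F] (A : Type*) [CommRing A] [Algebra F A]
    (V : Type*) [AddCommGroup V] [Module F V] [Module A V] [IsScalarTower F A V]
    [FiniteDimensional F V] [FaithfulSMul A V]
    (huni : Nontrivial V ∧ ∀ W₁ W₂ : Submodule A V, W₁ ≤ W₂ ∨ W₂ ≤ W₁) :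
    ∃ v : V, Submodule.span A {v} = ⊤ ∧
      (∀ a : A, a • v = 0 → a = 0) ∧
      Function.Bijective (fun a : A => a • v) ∧
      (Nontrivial A ∧ ∀ I J : Submodule A A, I ≤ J ∨ J ≤ I) := by
  obtain ⟨hV, hchain⟩ := huni
  haveI : IsNoetherian F V := inferInstance
  haveI : IsNoetherian A V := isNoetherian_of_tower F ‹_›
  -- a maximal proper submodule
  have hne : (⊥ : Submodule A V) ≠ ⊤ := bot_ne_top
  obtain ⟨m, hm, hmax⟩ :=
    (wellFounded_gt (α := Submodule A V)).has_min {W : Submodule A V | W ≠ ⊤} ⟨⊥, hne⟩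
  -- every proper submodule is ≤ m
  have hle : ∀ W : Submodule A V, W ≠ ⊤ → W ≤ m := by
    intro W hW
    rcases hchain W m with h | h
    · exact h
    · rcases eq_or_lt_of_le h with rfl | hlt
      · exact le_rfl
      · exact absurd hlt (hmax W hW)
  have hmlt : m < (⊤ : Submodule A V) := lt_top_iff_ne_top.mpr hm
  obtain ⟨v, -, hvm⟩ := SetLike.exists_of_lt hmlt
  refine ⟨v, ?_, ?_, ?_, ?_⟩
  · by_contra hspan
    exact hvm (hle _ hspan (Submodule.mem_span_singleton_self v))
  all_goals
    have hspan : Submodule.span A {v} = ⊤ := by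
      by_contra hspan
      exact hvm (hle _ hspan (Submodule.mem_span_singleton_self v))
  all_goals
    have hann : ∀ a : A, a • v = 0 → a = 0 := by
      intro a ha
      refine FaithfulSMul.eq_of_smul_eq_smul (M := A) (α := V) (fun x => ?_)
      have hx : x ∈ Submodule.span A {v} := hspan ▸ Submodule.mem_top
      obtain ⟨c, rfl⟩ := Submodule.mem_span_singleton.mp hx
      rw [smul_comm, ha, smul_zero, zero_smul]
  all_goals
    have hbij : Function.Bijective (fun a : A => a • v) := by
      constructor
      · intro a b hab
        have : (a - b) • v = 0 := by
          simp only at hab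
          rw [sub_smul, hab, sub_self]
        exact sub_eq_zero.mp (hann _ this)
      · intro x
        have hx : x ∈ Submodule.span A {v} := hspan ▸ Submodule.mem_top
        obtain ⟨c, hc⟩ := Submodule.mem_span_singleton.mp hx
        exact ⟨c, hc⟩
  · exact hann
  · exact hbij
  · constructor
    · by_contra h
      rw [not_nontrivial_iff_subsingleton] at h
      obtain ⟨x, y, hxy⟩ := hV
      apply hxy
      obtain ⟨a, rfl⟩ := hbij.2 x
      obtain ⟨b, rfl⟩ := hbij.2 y
      simp [Subsingleton.elim a b]
    · intro I J
      set f : A →ₗ[A] V := LinearMap.toSpanSingleton A V v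
      have hf : Function.Injective f := by
        intro a b hab
        exact hbij.1 hab
      have := hchain (I.map f) (J.map f)
      rcases this with h | h
      · exact Or.inl ((Submodule.map_le_map_iff_of_injective hf I J).mp h)
      · exact Or.inr ((Submodule.map_le_map_iff_of_injective hf J I).mp h)
end
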